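/- arXiv:1810.06495 — 7 statements merged into one kernel-verified Lean document; each statement's English description precedes it below -/
import Mathlib

section
/- Let n be a positive natural number, let k_out, k_in : Fin n → ℕ be out- and in-degree sequences with ∑_i k_out(i) = ∑_j k_in(j) = m for some m > 0, let Ξ be the combinatorial matrix with Ξ_ij = k_out(i) · k_in(j), and let M = ∑_{i,j} Ξ_ij (so M = m²). Then for every vertex j, working in ℚ, the expected in-degree of j under the directed soft configuration model equals k_in(j): (∑_{A : Fin n × Fin n → ℕ, ∑ A = m} (∑_i A(i,j)) · ∏_{(i,l)} C(Ξ_il, A(i,l))) / C(M, m) = k_in(j); and symmetrically, for every vertex i the expected out-degree (∑_A (∑_j A(i,j)) · ∏ C(Ξ, A)) / C(M, m) = k_out(i). -/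
open Finset


lemma vand_aux {ι : Type*} [DecidableEq ι] (s : Finset ι) (f : ι → ℕ) :
    ∀ m : ℕ, ∑ A ∈ s.piAntidiag m, ∏ i ∈ s, (f i).choose (A i) = (∑ i ∈ s, f i).choose m := by
  induction s using Finset.cons_induction with
  | empty =>
    intro m
    rw [piAntidiag_empty]
    split_ifs with h <;> simp [h, Nat.choose_eq_zero_of_lt, Nat.pos_of_ne_zero]
  | cons i s hi ih =>
    intro m
    rw [piAntidiag_cons, sum_disjiUnion, sum_cons, Nat.add_choose_eq]
    refine Finset.sum_congr rfl fun p hp => ?_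
    rw [Finset.sum_map]
    have : ∀ g ∈ s.piAntidiag p.2,
        ∏ t ∈ cons i s hi, (f t).choose ((addRightEmbedding fun t => if t = i then p.1 else 0) g t)
          = (f i).choose p.1 * ∏ t ∈ s, (f t).choose (g t) := by
      intro g hg
      rw [mem_piAntidiag] at hg
      have hgi : g i = 0 := by
        by_contra h
        exact hi (hg.2 i h)
      rw [prod_cons]
      congr 1
      · simp [addRightEmbedding, hgi]
      · refine Finset.prod_congr rfl fun t ht => ?_
        have : t ≠ i := fun h => hi (h ▸ ht)
        simp [addRightEmbedding, this]
    rw [Finset.sum_congr rfl this, ← Finset.mul_sum, ih]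

lemma succ_mul_choose' (n k : ℕ) : (k + 1) * n.choose (k + 1) = n * (n - 1).choose k := by
  cases n with
  | zero => simp
  | succ n =>
    rw [Nat.succ_sub_one, mul_comm]
    rw [Nat.add_one_mul_choose_eq, mul_comm]

lemma weighted_aux {ι : Type*} [DecidableEq ι] [Fintype ι] (f : ι → ℕ) (q : ι) (m : ℕ)
    (hm : 0 < m) :
    ∑ A ∈ (univ : Finset ι).piAntidiag m, A q * ∏ p, (f p).choose (A p)
      = f q * ((∑ p, f p) - 1).choose (m - 1) := by
  have hfilter : ∑ A ∈ (univ : Finset ι).piAntidiag m, A q * ∏ p, (f p).choose (A p)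
      = ∑ A ∈ ((univ : Finset ι).piAntidiag m).filter (fun A => A q ≠ 0),
          A q * ∏ p, (f p).choose (A p) := by
    rw [Finset.sum_filter_of_ne]
    intro A hA h h0
    simp [h0] at h
  rw [hfilter]
  rw [Finset.sum_nbij' (i := fun A => Function.update A q (A q - 1))
    (j := fun B => Function.update B q (B q + 1))
    (g := fun B => (B q + 1) * ∏ p, (f p).choose (Function.update B q (B q + 1) p))
    (t := (univ : Finset ι).piAntidiag (m - 1))
    ?_ ?_ ?_ ?_ ?_]
  · have key : ∀ B ∈ (univ : Finset ι).piAntidiag (m - 1),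
        (B q + 1) * ∏ p, (f p).choose (Function.update B q (B q + 1) p)
          = f q * ∏ p, (Function.update f q (f q - 1) p).choose (B p) := by
      intro B hB
      rw [Fintype.prod_eq_mul_prod_compl q, Fintype.prod_eq_mul_prod_compl q
        (fun p => (Function.update f q (f q - 1) p).choose (B p))]
      simp only [Function.update_self]
      rw [← mul_assoc, succ_mul_choose', mul_assoc]
      congr 2
      refine Finset.prod_congr rfl fun p hp => ?_
      have hpq : p ≠ q := by simpa using hp
      rw [Function.update_of_ne hpq, Function.update_of_ne hpq]
    rw [Finset.sum_congr rfl key, ← Finset.mul_sum, vand_aux]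
    rcases Nat.eq_zero_or_pos (f q) with h0 | h0
    · simp [h0]
    · congr 2
      have hs : ∑ p ∈ ({q}ᶜ : Finset ι), Function.update f q (f q - 1) p
          = ∑ p ∈ ({q}ᶜ : Finset ι), f p :=
        Finset.sum_congr rfl fun p hp => Function.update_of_ne (by simpa using hp) _ _
      rw [Fintype.sum_eq_add_sum_compl q (Function.update f q (f q - 1)),
        Fintype.sum_eq_add_sum_compl q f, Function.update_self, hs]
      clear hfilter
      omega
  · -- maps to
    intro A hA
    simp only [mem_filter, mem_piAntidiag, mem_univ, implies_true, and_true] at hA ⊢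
    obtain ⟨hsum, hq⟩ := hA
    rw [Fintype.sum_eq_add_sum_compl q, Function.update_self]
    have hs : ∑ p ∈ ({q}ᶜ : Finset ι), Function.update A q (A q - 1) p
        = ∑ p ∈ ({q}ᶜ : Finset ι), A p :=
      Finset.sum_congr rfl fun p hp => Function.update_of_ne (by simpa using hp) _ _
    rw [hs]
    rw [Fintype.sum_eq_add_sum_compl q] at hsum
    clear hfilter
    omega
  · intro B hB
    simp only [mem_filter, mem_piAntidiag, mem_univ, implies_true, and_true] at hB ⊢
    refine ⟨?_, by simp⟩
    rw [Fintype.sum_eq_add_sum_compl q, Function.update_self]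
    have hs : ∑ p ∈ ({q}ᶜ : Finset ι), Function.update B q (B q + 1) p
        = ∑ p ∈ ({q}ᶜ : Finset ι), B p :=
      Finset.sum_congr rfl fun p hp => Function.update_of_ne (by simpa using hp) _ _
    rw [hs]
    rw [Fintype.sum_eq_add_sum_compl q] at hB
    clear hfilter
    omega
  · intro A hA
    simp only [mem_filter, mem_piAntidiag, mem_univ, implies_true, and_true] at hA
    funext p
    rcases eq_or_ne p q with rfl | h
    · simp only [Function.update_self]
      clear hfilter
      omega
    · rw [Function.update_of_ne h, Function.update_of_ne h]
  · intro B hB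
    funext p
    rcases eq_or_ne p q with rfl | h
    · simp only [Function.update_self]
      clear hfilter
      omega
    · rw [Function.update_of_ne h, Function.update_of_ne h]
  · intro A hA
    simp only [mem_filter, mem_piAntidiag, mem_univ, implies_true, and_true] at hA
    have hq := hA.2
    congr 1
    · rw [Function.update_self]; clear hfilter; omega
    · refine Finset.prod_congr rfl fun p hp => ?_
      rcases eq_or_ne p q with rfl | h
      · rw [Function.update_self, Function.update_self]
        congr 1
        clear hfilter
        omega
      · rw [Function.update_of_ne h, Function.update_of_ne h]

lemma filter_eq_piAntidiag {ι : Type*} [Fintype ι] [DecidableEq ι] (m : ℕ) :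
    (Fintype.piFinset fun _ : ι => Finset.range (m + 1)).filter (fun A => ∑ p, A p = m)
      = (univ : Finset ι).piAntidiag m := by
  ext A
  simp only [mem_filter, Fintype.mem_piFinset, mem_range, Nat.lt_succ_iff, mem_piAntidiag,
    mem_univ, implies_true, and_true]
  constructor
  · rintro ⟨-, h⟩; exact h
  · intro h
    exact ⟨fun p => h ▸ Finset.single_le_sum (fun i _ => Nat.zero_le _) (mem_univ p), h⟩

lemma expected_sum {ι : Type*} [Fintype ι] [DecidableEq ι] (f : ι → ℕ) (m : ℕ) (hm : 0 < m)
    {κ : Type*} [Fintype κ] (e : κ → ι) :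
    ∑ A ∈ (univ : Finset ι).piAntidiag m, (∑ i, A (e i)) * ∏ p, (f p).choose (A p)
      = (∑ i, f (e i)) * ((∑ p, f p) - 1).choose (m - 1) := by
  have : ∀ A ∈ (univ : Finset ι).piAntidiag m,
      (∑ i, A (e i)) * ∏ p, (f p).choose (A p)
        = ∑ i, A (e i) * ∏ p, (f p).choose (A p) := fun A _ => Finset.sum_mul _ _ _
  rw [Finset.sum_congr rfl this, Finset.sum_comm]
  rw [Finset.sum_congr rfl fun i (_ : i ∈ univ) => weighted_aux f (e i) m hm, ← Finset.sum_mul]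

lemma final_div (m M N k : ℕ) (hm : 0 < m) (hMm : M = m * m)
    (hN : N = m * k * ((M - 1).choose (m - 1))) : (N : ℚ) / (M.choose m) = k := by
  have hmM : m ≤ M := hMm ▸ Nat.le_mul_of_pos_left m hm
  have hc : (0:ℚ) < (M.choose m : ℚ) := by exact_mod_cast Nat.choose_pos hmM
  have key : m * ((M - 1).choose (m - 1)) = M.choose m := by
    have h1 := Nat.add_one_mul_choose_eq (M - 1) (m - 1)
    have hM1 : M - 1 + 1 = M := Nat.succ_pred_eq_of_pos (hMm ▸ Nat.mul_pos hm hm)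
    have hm1 : m - 1 + 1 = m := Nat.succ_pred_eq_of_pos hm
    rw [hM1, hm1] at h1
    have : m * (m * ((M - 1).choose (m - 1))) = M.choose m * m := by
      rw [← mul_assoc, ← hMm]; exact h1
    exact Nat.eq_of_mul_eq_mul_right hm (by linarith [this])
  have : N = k * M.choose m := by
    rw [hN, mul_comm m k, mul_assoc, key]
  rw [this]
  push_cast
  field_simp
/-- The expected in- and out-degree sequences of the directed soft configuration
model induced by degree sequences `kout`, `kin` (with common total `m`, combinatorial
matrix `Ξ (i,j) = kout i * kin j` and `M = ∑ Ξ`) coincide with the inducing degree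
sequences: `E[k_in j (X)] = kin j` and `E[k_out i (X)] = kout i`. -/
theorem softConfigurationModel_expected_degrees
    (n : ℕ) (hn : 0 < n) (kout kin : Fin n → ℕ) (m : ℕ) (hm : 0 < m)
    (hout : ∑ i, kout i = m) (hin : ∑ j, kin j = m)
    (Ξ : Fin n × Fin n → ℕ) (hΞ : ∀ p, Ξ p = kout p.1 * kin p.2)
    (M : ℕ) (hM : M = ∑ p, Ξ p) :
    (∀ j : Fin n,
      (∑ A ∈ (Fintype.piFinset fun _ : Fin n × Fin n => Finset.range (m + 1)).filter
          (fun A => ∑ p, A p = m),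
        ((∑ i, A (i, j) : ℕ) : ℚ) * ∏ p, ((Ξ p).choose (A p) : ℚ)) / (M.choose m : ℚ)
        = (kin j : ℚ)) ∧
    (∀ i : Fin n,
      (∑ A ∈ (Fintype.piFinset fun _ : Fin n × Fin n => Finset.range (m + 1)).filter
          (fun A => ∑ p, A p = m),
        ((∑ j, A (i, j) : ℕ) : ℚ) * ∏ p, ((Ξ p).choose (A p) : ℚ)) / (M.choose m : ℚ)
        = (kout i : ℚ)) := by
  have hMmul : M = m * m := by
    have h : ∑ p : Fin n × Fin n, Ξ p = (∑ i, kout i) * (∑ j, kin j) := by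
      rw [Finset.sum_mul_sum, Fintype.sum_prod_type]
      exact Finset.sum_congr rfl fun i _ => Finset.sum_congr rfl fun j _ => hΞ (i, j)
    rw [hM, h, hout, hin]
  constructor
  · intro j
    have hNat := expected_sum Ξ m hm (fun i : Fin n => ((i, j) : Fin n × Fin n))
    have hsum : ∑ i, Ξ (i, j) = m * kin j := by
      simp only [hΞ]
      rw [← Finset.sum_mul, hout]
    rw [hsum, ← hM] at hNat
    rw [filter_eq_piAntidiag]
    have hcast : (∑ A ∈ (univ : Finset (Fin n × Fin n)).piAntidiag m,
        ((∑ i, A (i, j) : ℕ) : ℚ) * ∏ p, ((Ξ p).choose (A p) : ℚ))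
        = ((∑ A ∈ (univ : Finset (Fin n × Fin n)).piAntidiag m,
            (∑ i, A (i, j)) * ∏ p, (Ξ p).choose (A p) : ℕ) : ℚ) := by
      push_cast
      rfl
    rw [hcast, hNat]
    exact final_div m M _ (kin j) hm hMmul rfl
  · intro i
    have hNat := expected_sum Ξ m hm (fun j : Fin n => ((i, j) : Fin n × Fin n))
    have hsum : ∑ j, Ξ (i, j) = m * kout i := by
      simp only [hΞ]
      rw [← Finset.mul_sum, hin, mul_comm]
    rw [hsum, ← hM] at hNat
    rw [filter_eq_piAntidiag]
    have hcast : (∑ A ∈ (univ : Finset (Fin n × Fin n)).piAntidiag m,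
        ((∑ j, A (i, j) : ℕ) : ℚ) * ∏ p, ((Ξ p).choose (A p) : ℚ))
        = ((∑ A ∈ (univ : Finset (Fin n × Fin n)).piAntidiag m,
            (∑ j, A (i, j)) * ∏ p, (Ξ p).choose (A p) : ℕ) : ℚ) := by
      push_cast
      rfl
    rw [hcast, hNat]
    exact final_div m M _ (kout i) hm hMmul rfl
end

section
/- Let n and m be natural numbers, let Ξ : Fin n × Fin n → ℕ be symmetric (Ξ_ij = Ξ_ji), and let M = ∑_{i,j} Ξ_ij. Then the sum, over all symmetric matrices A : Fin n × Fin n → ℕ with every diagonal entry A_ll even and with ∑_{i<j} A_ij + ∑_l A_ll/2 = m, of ∏_{i<j} C(2·Ξ_ij, A_ij) · ∏_l C(Ξ_ll, A_ll/2), equals C(M, m). (This is the normalization of the multivariate hypergeometric distribution underlying the undirected soft configuration model: the probabilities Pr(X = A) = ∏_{i<j} C(2Ξ_ij, A_ij) · ∏_l C(Ξ_ll, A_ll/2) / C(M, m) sum to one.) -/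
open Finset

/-- Multivariate Vandermonde identity. -/
lemma pi_vandermonde {ι : Type*} [DecidableEq ι] (s : Finset ι) (w : ι → ℕ) (m : ℕ) :
    ∑ f ∈ s.piAntidiag m, ∏ i ∈ s, (w i).choose (f i) = (∑ i ∈ s, w i).choose m := by
  induction s using Finset.cons_induction generalizing m with
  | empty =>
    rcases m with _ | m
    · simp
    · simp [Nat.choose_eq_zero_of_lt (Nat.succ_pos m)]
  | cons i s hi ih =>
    rw [piAntidiag_cons, sum_disjiUnion, sum_cons, Nat.add_choose_eq]
    refine sum_congr rfl fun p hp => ?_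
    rw [sum_map, ← ih p.2, mul_sum]
    refine sum_congr rfl fun g hg => ?_
    obtain ⟨hsum, hsupp⟩ := mem_piAntidiag.1 hg
    have hgi : g i = 0 := by
      by_contra h
      exact hi (hsupp i h)
    rw [prod_cons]
    simp only [addRightEmbedding_apply, Pi.add_apply]
    congr 1
    · simp [hgi]
    · refine prod_congr rfl fun j hj => ?_
      have : j ≠ i := fun h => hi (h ▸ hj)
      simp [this]

/-- Normalization of the multivariate hypergeometric distribution underlying the
undirected soft configuration model: summing the weights
`∏_{i<j} C(2Ξ_ij, A_ij) * ∏_l C(Ξ_ll, A_ll / 2)` over all symmetric matrices `A` with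
even diagonal and `m` multi-edges equals `C(M, m)`, where `M = ∑_{i,j} Ξ_ij`. -/
theorem undirectedSoftConfigurationModel_normalization
    (n m : ℕ) (Ξ : Fin n × Fin n → ℕ) (hΞ : ∀ i j, Ξ (i, j) = Ξ (j, i))
    (M : ℕ) (hM : M = ∑ p, Ξ p) :
    ∑ A ∈ (Fintype.piFinset fun _ : Fin n × Fin n => Finset.range (2 * m + 1)).filter
        (fun A => (∀ i j, A (i, j) = A (j, i)) ∧ (∀ l, 2 ∣ A (l, l)) ∧
          (∑ p ∈ Finset.univ.filter (fun p : Fin n × Fin n => p.1 < p.2), A p)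
            + ∑ l, A (l, l) / 2 = m),
      (∏ p ∈ Finset.univ.filter (fun p : Fin n × Fin n => p.1 < p.2),
          (2 * Ξ p).choose (A p))
        * ∏ l, (Ξ (l, l)).choose (A (l, l) / 2)
      = M.choose m := by
  classical
  set D : Finset (Fin n × Fin n) := univ.filter (fun p => p.1 < p.2) with hD
  set E : Finset (Fin n × Fin n) := univ.filter (fun p => p.1 = p.2) with hE
  set S : Finset (Fin n × Fin n) := univ.filter (fun p => p.1 ≤ p.2) with hS
  set W : Fin n × Fin n → ℕ := fun p => if p.1 = p.2 then Ξ p else 2 * Ξ p with hWdef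
  have hdisj : Disjoint D E := by
    rw [disjoint_left]
    intro p hp hp'
    simp only [hD, hE, mem_filter, mem_univ, true_and] at hp hp'
    exact absurd hp' (ne_of_lt hp)
  have hunion : S = D ∪ E := by
    ext p
    simp only [hS, hD, hE, mem_filter, mem_univ, true_and, mem_union, le_iff_lt_or_eq]
  -- diagonal embedding
  have hEmap : E = univ.map ⟨fun l : Fin n => (l, l), fun a b h => by
      simpa [Prod.ext_iff] using h⟩ := by
    ext ⟨a, b⟩
    simp only [hE, mem_filter, mem_univ, true_and, mem_map, Function.Embedding.coeFn_mk,
      Prod.mk.injEq]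
    constructor
    · rintro rfl; exact ⟨a, rfl⟩
    · rintro ⟨l, rfl, rfl⟩; rfl
  have hEsum : ∀ h : Fin n × Fin n → ℕ, ∑ p ∈ E, h p = ∑ l, h (l, l) := by
    intro h; rw [hEmap, sum_map]; rfl
  have hEprod : ∀ h : Fin n × Fin n → ℕ, ∏ p ∈ E, h p = ∏ l, h (l, l) := by
    intro h; rw [hEmap, prod_map]; rfl
  -- total weight
  have hswap : ∑ p ∈ univ.filter (fun p : Fin n × Fin n => p.2 < p.1), Ξ p
      = ∑ p ∈ D, Ξ p := by
    refine Finset.sum_nbij' (fun p => (p.2, p.1)) (fun p => (p.2, p.1)) ?_ ?_ ?_ ?_ ?_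
    · intro p hp
      simp only [hD, mem_filter, mem_univ, true_and] at hp ⊢
      exact hp
    · intro p hp
      simp only [hD, mem_filter, mem_univ, true_and] at hp ⊢
      exact hp
    · intro p _; rfl
    · intro p _; rfl
    · intro p _; exact hΞ p.2 p.1 ▸ rfl
  have hWsum : ∑ p ∈ S, W p = M := by
    have huniv : (univ : Finset (Fin n × Fin n))
        = (D ∪ E) ∪ univ.filter (fun p => p.2 < p.1) := by
      ext p
      simp only [mem_univ, mem_union, hD, hE, mem_filter, true_and, true_iff]
      rcases lt_trichotomy p.1 p.2 with h | h | h
      · exact Or.inl (Or.inl h)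
      · exact Or.inl (Or.inr h)
      · exact Or.inr h
    have hdisj2 : Disjoint (D ∪ E) (univ.filter (fun p : Fin n × Fin n => p.2 < p.1)) := by
      rw [disjoint_left]
      intro p hp hp'
      simp only [hD, hE, mem_union, mem_filter, mem_univ, true_and] at hp hp'
      rcases hp with h | h
      · exact absurd hp' (asymm h)
      · exact absurd hp' (h ▸ lt_irrefl _)
    rw [hunion, sum_union hdisj]
    have : M = (∑ p ∈ D, Ξ p + ∑ p ∈ E, Ξ p)
        + ∑ p ∈ univ.filter (fun p : Fin n × Fin n => p.2 < p.1), Ξ p := by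
      rw [hM, ← sum_union hdisj, ← sum_union hdisj2, ← huniv]
    rw [this, hswap]
    have h1 : ∑ p ∈ D, W p = ∑ p ∈ D, 2 * Ξ p := by
      refine sum_congr rfl fun p hp => ?_
      simp only [hD, mem_filter, mem_univ, true_and] at hp
      simp [hWdef, ne_of_lt hp]
    have h2 : ∑ p ∈ E, W p = ∑ p ∈ E, Ξ p := by
      refine sum_congr rfl fun p hp => ?_
      simp only [hE, mem_filter, mem_univ, true_and] at hp
      simp [hWdef, hp]
    rw [h1, h2]
    have : ∑ p ∈ D, 2 * Ξ p = ∑ p ∈ D, Ξ p + ∑ p ∈ D, Ξ p := by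
      rw [← sum_add_distrib]
      exact sum_congr rfl fun p _ => two_mul _
    omega
  rw [← hWsum, ← pi_vandermonde S W m]
  -- bijection
  refine Finset.sum_nbij'
    (fun A p => if p.1 < p.2 then A p else if p.1 = p.2 then A p / 2 else 0)
    (fun g p => if p.1 < p.2 then g p else if p.2 < p.1 then g (p.2, p.1) else 2 * g p)
    ?_ ?_ ?_ ?_ ?_
  · -- forward membership
    intro A hA
    simp only [mem_filter, Fintype.mem_piFinset, mem_range] at hA
    obtain ⟨hApi, hsym, hev, hm⟩ := hA
    rw [mem_piAntidiag]
    constructor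
    · rw [hunion, sum_union hdisj]
      have h1 : ∑ p ∈ D, (if p.1 < p.2 then A p else if p.1 = p.2 then A p / 2 else 0) =
          ∑ p ∈ D, A p := by
        refine sum_congr rfl fun p hp => ?_
        simp only [hD, mem_filter, mem_univ, true_and] at hp
        simp [hp]
      have h2 : ∑ p ∈ E, (if p.1 < p.2 then A p else if p.1 = p.2 then A p / 2 else 0) =
          ∑ l, A (l, l) / 2 := by
        rw [hEsum]
        simp
      rw [h1, h2]
      exact hm
    · intro p hp
      simp only [hS, mem_filter, mem_univ, true_and]
      by_contra h
      push_neg at h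
      have h1 : ¬ p.1 < p.2 := not_lt_of_gt h
      have h2 : p.1 ≠ p.2 := ne_of_gt h
      simp [h1, h2] at hp
  · -- backward membership
    intro g hg
    obtain ⟨hgsum, hgsupp⟩ := mem_piAntidiag.1 hg
    have hgle : ∀ p, g p ≤ m := by
      intro p
      by_cases hp : p ∈ S
      · exact hgsum ▸ single_le_sum (fun q _ => Nat.zero_le _) hp
      · have : g p = 0 := by
          by_contra h
          exact hp (hgsupp p h)
        simp [this]
    simp only [mem_filter, Fintype.mem_piFinset, mem_range]
    refine ⟨?_, ?_, ?_, ?_⟩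
    · intro p
      obtain ⟨a, b⟩ := p
      have h1 := hgle (a, b)
      have h2 := hgle (b, a)
      rcases lt_trichotomy a b with h | h | h
      · simp only [if_pos h]
        omega
      · subst h
        have hn : ¬ a < a := lt_irrefl a
        simp only [if_neg hn]
        omega
      · have hn : ¬ a < b := asymm h
        simp only [if_neg hn, if_pos h]
        omega
    · intro i j
      rcases lt_trichotomy i j with h | h | h
      · have h2 : ¬ j < i := asymm h
        simp [h, h2]
      · subst h; rfl
      · have h2 : ¬ i < j := asymm h
        simp [h, h2]
    · intro l
      simp
    · have h1 : ∑ p ∈ D,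
          (if p.1 < p.2 then g p else if p.2 < p.1 then g (p.2, p.1) else 2 * g p) =
          ∑ p ∈ D, g p := by
        refine sum_congr rfl fun p hp => ?_
        simp only [hD, mem_filter, mem_univ, true_and] at hp
        simp [hp]
      have h2 : ∑ l : Fin n,
          (if (l, l).1 < (l, l).2 then g (l, l) else if (l, l).2 < (l, l).1
            then g ((l, l).2, (l, l).1) else 2 * g (l, l)) / 2 = ∑ l, g (l, l) := by
        refine Fintype.sum_congr _ _ fun l => ?_
        simp only [lt_self_iff_false, if_false]
        omega
      rw [h1, h2, ← hEsum g, ← sum_union hdisj, ← hunion]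
      exact hgsum
  · -- left inverse
    intro A hA
    simp only [mem_filter, Fintype.mem_piFinset, mem_range] at hA
    obtain ⟨hApi, hsym, hev, hm⟩ := hA
    funext p
    obtain ⟨a, b⟩ := p
    rcases lt_trichotomy a b with h | h | h
    · simp [h]
    · subst h
      obtain ⟨k, hk⟩ := hev a
      have hn : ¬ a < a := lt_irrefl a
      simp only [if_neg hn, if_pos rfl, eq_self_iff_true, if_true]
      omega
    · have hn : ¬ a < b := asymm h
      have hn2 : a ≠ b := ne_of_gt h
      simp only [if_neg hn, if_pos h, if_pos (show b < a from h)]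
      exact hsym b a
  · -- right inverse
    intro g hg
    obtain ⟨hgsum, hgsupp⟩ := mem_piAntidiag.1 hg
    funext p
    obtain ⟨a, b⟩ := p
    rcases lt_trichotomy a b with h | h | h
    · simp [h]
    · subst h
      have hn : ¬ a < a := lt_irrefl a
      simp only [if_neg hn, if_pos rfl, eq_self_iff_true, if_true]
      omega
    · have hn : ¬ a < b := asymm h
      have hn2 : a ≠ b := ne_of_gt h
      simp only [if_neg hn, if_neg hn2]
      have : g (a, b) = 0 := by
        by_contra hc
        have := hgsupp (a, b) hc
        simp only [hS, mem_filter, mem_univ, true_and] at this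
        exact absurd this (not_le_of_gt h)
      exact this.symm
  · -- values agree
    intro A hA
    simp only [mem_filter, Fintype.mem_piFinset, mem_range] at hA
    obtain ⟨hApi, hsym, hev, hm⟩ := hA
    rw [hunion, prod_union hdisj]
    congr 1
    · refine prod_congr rfl fun p hp => ?_
      simp only [hD, mem_filter, mem_univ, true_and] at hp
      simp [hWdef, hp, ne_of_lt hp]
    · rw [hEprod]
      refine Fintype.prod_congr _ _ fun l => ?_
      simp [hWdef]
end

section
/- Let n and m be natural numbers, let Ξ : Fin n × Fin n → ℕ be symmetric, and let M = ∑_{i,j} Ξ_ij. Fix a pair of distinct vertices i₀ ≠ j₀ and a ≤ m. Then the sum, over all symmetric matrices A : Fin n × Fin n → ℕ with even diagonal entries, with ∑_{i<j} A_ij + ∑_l A_ll/2 = m and with A_{i₀j₀} = a, of ∏_{i<j} C(2Ξ_ij, A_ij) · ∏_l C(Ξ_ll, A_ll/2), equals C(2Ξ_{i₀j₀}, a) · C(M − 2Ξ_{i₀j₀}, m − a). Moreover, for a fixed vertex l₀ and even a ≤ 2m, the corresponding sum over such A with A_{l₀l₀} = a equals C(Ξ_{l₀l₀}, a/2) ·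 C(M − Ξ_{l₀l₀}, m − a/2). -/
open Finset

lemma key_sum {ι : Type*} [Fintype ι] [DecidableEq ι] (c : ι → ℕ) (N : ℕ)
    (s : Finset ι) : ∀ t, t ≤ N →
    ∑ g ∈ (Fintype.piFinset fun _ : ι => Finset.range (N + 1)).filter
        (fun g => (∀ p ∉ s, g p = 0) ∧ ∑ p ∈ s, g p = t),
      ∏ p ∈ s, (c p).choose (g p) = (∑ p ∈ s, c p).choose t := by
  classical
  induction s using Finset.induction_on with
  | empty =>
    intro t ht
    rcases Nat.eq_zero_or_pos t with rfl | htpos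
    · have hset : (Fintype.piFinset fun _ : ι => Finset.range (N + 1)).filter
          (fun g => (∀ p ∉ (∅ : Finset ι), g p = 0) ∧ ∑ p ∈ (∅ : Finset ι), g p = 0)
          = {fun _ => 0} := by
        ext g
        rw [mem_filter, mem_singleton]
        constructor
        · rintro ⟨-, h, -⟩
          funext p; exact h p (Finset.notMem_empty p)
        · rintro rfl
          refine ⟨?_, fun p _ => rfl, ?_⟩
          · rw [Fintype.mem_piFinset]; intro p; rw [mem_range]; omega
          · simp
      rw [hset]; simp
    · have hset : (Fintype.piFinset fun _ : ι => Finset.range (N + 1)).filter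
          (fun g => (∀ p ∉ (∅ : Finset ι), g p = 0) ∧ ∑ p ∈ (∅ : Finset ι), g p = t)
          = ∅ := by
        ext g
        simp only [mem_filter, Finset.sum_empty, Finset.notMem_empty, iff_false]
        rintro ⟨-, -, h⟩; omega
      rw [hset]
      simp [Nat.choose_eq_zero_of_lt htpos]
  | @insert p₀ s' hp₀ ih =>
    intro t ht
    rw [Finset.sum_insert hp₀]
    have hbij :
        ∑ g ∈ (Fintype.piFinset fun _ : ι => Finset.range (N + 1)).filter
            (fun g => (∀ p ∉ insert p₀ s', g p = 0) ∧ ∑ p ∈ insert p₀ s', g p = t),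
          ∏ p ∈ insert p₀ s', (c p).choose (g p)
        = ∑ x ∈ (Finset.range (t + 1)).sigma (fun k =>
            (Fintype.piFinset fun _ : ι => Finset.range (N + 1)).filter
              (fun g => (∀ p ∉ s', g p = 0) ∧ ∑ p ∈ s', g p = t - k)),
            (c p₀).choose x.1 * ∏ p ∈ s', (c p).choose (x.2 p) := by
      refine Finset.sum_bij'
        (fun (g : ι → ℕ) (_ : g ∈ _) => (⟨g p₀, Function.update g p₀ 0⟩ : (_ : ℕ) × (ι → ℕ)))
        (fun (x : (_ : ℕ) × (ι → ℕ)) (_ : x ∈ _) => Function.update x.2 p₀ x.1)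
        ?_ ?_ ?_ ?_ ?_
      · rintro g hg
        simp only [mem_filter, Fintype.mem_piFinset, mem_range] at hg
        obtain ⟨hpi, hsupp, hsum⟩ := hg
        rw [Finset.sum_insert hp₀] at hsum
        have hupd : ∑ p ∈ s', Function.update g p₀ 0 p = ∑ p ∈ s', g p :=
          Finset.sum_congr rfl fun p hp =>
            Function.update_of_ne (by rintro rfl; exact hp₀ hp) _ _
        simp only [mem_sigma, mem_range, mem_filter, Fintype.mem_piFinset]
        refine ⟨by omega, fun p => ?_, fun p hp => ?_, by rw [hupd]; omega⟩
        · by_cases h : p = p₀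
          · subst h; simp
          · rw [Function.update_of_ne h]; exact hpi p
        · by_cases h : p = p₀
          · subst h; simp
          · rw [Function.update_of_ne h]
            exact hsupp p (by simp [hp, h])
      · rintro ⟨k, g⟩ hx
        simp only [mem_sigma, mem_range, mem_filter, Fintype.mem_piFinset] at hx
        obtain ⟨hk, hpi, hsupp, hsum⟩ := hx
        have hgsum : ∑ p ∈ s', g p ≤ t - k := le_of_eq hsum
        have hupd : ∑ p ∈ s', Function.update g p₀ k p = ∑ p ∈ s', g p :=
          Finset.sum_congr rfl fun p hp =>
            Function.update_of_ne (by rintro rfl; exact hp₀ hp) _ _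
        simp only [mem_filter, Fintype.mem_piFinset, mem_range]
        refine ⟨fun p => ?_, fun p hp => ?_, ?_⟩
        · by_cases h : p = p₀
          · subst h; simp; omega
          · rw [Function.update_of_ne h]; exact hpi p
        · simp only [Finset.mem_insert, not_or] at hp
          rw [Function.update_of_ne hp.1]
          exact hsupp p hp.2
        · rw [Finset.sum_insert hp₀, Function.update_self, hupd]
          omega
      · rintro g hg
        dsimp only
        funext p
        by_cases h : p = p₀
        · subst h; simp
        · simp [Function.update_of_ne h]
      · rintro ⟨k, g⟩ hx
        simp only [mem_sigma, mem_range, mem_filter, Fintype.mem_piFinset] at hx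
        have hg0 : g p₀ = 0 := hx.2.2.1 p₀ hp₀
        dsimp only
        rw [Function.update_self, Sigma.mk.inj_iff]
        refine ⟨rfl, heq_of_eq ?_⟩
        funext p
        by_cases h : p = p₀
        · subst h; simp [hg0]
        · simp [Function.update_of_ne h]
      · rintro g hg
        dsimp only
        rw [Finset.prod_insert hp₀]
        congr 1
        refine Finset.prod_congr rfl fun p hp => ?_
        rw [Function.update_of_ne (by rintro rfl; exact hp₀ hp)]
    rw [hbij, Finset.sum_sigma]
    have hstep : ∀ k ∈ Finset.range (t + 1),
        ∑ g ∈ (Fintype.piFinset fun _ : ι => Finset.range (N + 1)).filter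
            (fun g => (∀ p ∉ s', g p = 0) ∧ ∑ p ∈ s', g p = t - k),
          (c p₀).choose k * ∏ p ∈ s', (c p).choose (g p)
        = (c p₀).choose k * (∑ p ∈ s', c p).choose (t - k) := by
      intro k hk
      have hk' : t - k ≤ N := Nat.le_trans (Nat.sub_le t k) ht
      have hih := ih (t - k) hk'
      rw [← Finset.mul_sum, hih]
    trans ∑ k ∈ Finset.range (t + 1), (c p₀).choose k * (∑ p ∈ s', c p).choose (t - k)
    · exact Finset.sum_congr rfl hstep
    · rw [Nat.add_choose_eq, Finset.Nat.sum_antidiagonal_eq_sum_range_succ_mk]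

lemma key_sum_fixed {ι : Type*} [Fintype ι] [DecidableEq ι] (c : ι → ℕ) (N : ℕ)
    (s : Finset ι) (p₀ : ι) (hp₀ : p₀ ∈ s) (t a : ℕ) (hat : a ≤ t) (htN : t ≤ N) :
    ∑ g ∈ (Fintype.piFinset fun _ : ι => Finset.range (N + 1)).filter
        (fun g => (∀ p ∉ s, g p = 0) ∧ ∑ p ∈ s, g p = t ∧ g p₀ = a),
      ∏ p ∈ s, (c p).choose (g p)
    = (c p₀).choose a * (∑ p ∈ s.erase p₀, c p).choose (t - a) := by
  classical
  have hbij :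
      ∑ g ∈ (Fintype.piFinset fun _ : ι => Finset.range (N + 1)).filter
          (fun g => (∀ p ∉ s, g p = 0) ∧ ∑ p ∈ s, g p = t ∧ g p₀ = a),
        ∏ p ∈ s, (c p).choose (g p)
      = ∑ g ∈ (Fintype.piFinset fun _ : ι => Finset.range (N + 1)).filter
          (fun g => (∀ p ∉ s.erase p₀, g p = 0) ∧ ∑ p ∈ s.erase p₀, g p = t - a),
        (c p₀).choose a * ∏ p ∈ s.erase p₀, (c p).choose (g p) := by
    refine Finset.sum_bij'
      (fun (g : ι → ℕ) (_ : g ∈ _) => Function.update g p₀ 0)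
      (fun (g : ι → ℕ) (_ : g ∈ _) => Function.update g p₀ a)
      ?_ ?_ ?_ ?_ ?_
    · rintro g hg
      simp only [mem_filter, Fintype.mem_piFinset, mem_range] at hg
      obtain ⟨hpi, hsupp, hsum, hga⟩ := hg
      have hupd : ∑ p ∈ s.erase p₀, Function.update g p₀ 0 p = ∑ p ∈ s.erase p₀, g p :=
        Finset.sum_congr rfl fun p hp =>
          Function.update_of_ne (Finset.ne_of_mem_erase hp) _ _
      have herase : g p₀ + ∑ p ∈ s.erase p₀, g p = ∑ p ∈ s, g p :=
        Finset.add_sum_erase s g hp₀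
      simp only [mem_filter, Fintype.mem_piFinset, mem_range]
      refine ⟨fun p => ?_, fun p hp => ?_, ?_⟩
      · by_cases h : p = p₀
        · subst h; simp
        · rw [Function.update_of_ne h]; exact hpi p
      · by_cases h : p = p₀
        · subst h; simp
        · rw [Function.update_of_ne h]
          exact hsupp p (fun hps => hp (Finset.mem_erase.2 ⟨h, hps⟩))
      · rw [hupd]; omega
    · rintro g hg
      simp only [mem_filter, Fintype.mem_piFinset, mem_range] at hg
      obtain ⟨hpi, hsupp, hsum⟩ := hg
      have hupd : ∑ p ∈ s.erase p₀, Function.update g p₀ a p = ∑ p ∈ s.erase p₀, g p :=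
        Finset.sum_congr rfl fun p hp =>
          Function.update_of_ne (Finset.ne_of_mem_erase hp) _ _
      have herase : Function.update g p₀ a p₀ + ∑ p ∈ s.erase p₀, Function.update g p₀ a p
          = ∑ p ∈ s, Function.update g p₀ a p :=
        Finset.add_sum_erase s _ hp₀
      simp only [mem_filter, Fintype.mem_piFinset, mem_range]
      refine ⟨fun p => ?_, fun p hp => ?_, ?_, ?_⟩
      · by_cases h : p = p₀
        · subst h; simp; omega
        · rw [Function.update_of_ne h]; exact hpi p
      · have h : p ≠ p₀ := fun h => hp (h ▸ hp₀)
        rw [Function.update_of_ne h]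
        exact hsupp p (fun hpe => hp (Finset.mem_of_mem_erase hpe))
      · rw [← herase, Function.update_self, hupd]; omega
      · exact Function.update_self p₀ a g
    · rintro g hg
      simp only [mem_filter, Fintype.mem_piFinset, mem_range] at hg
      have hga : g p₀ = a := hg.2.2.2
      funext p
      by_cases h : p = p₀
      · subst h; simp [hga]
      · simp [Function.update_of_ne h]
    · rintro g hg
      simp only [mem_filter, Fintype.mem_piFinset, mem_range] at hg
      have hg0 : g p₀ = 0 := hg.2.1 p₀ (Finset.notMem_erase p₀ s)
      funext p
      by_cases h : p = p₀
      · subst h; simp [hg0]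
      · simp [Function.update_of_ne h]
    · rintro g hg
      simp only [mem_filter, Fintype.mem_piFinset, mem_range] at hg
      have hga : g p₀ = a := hg.2.2.2
      rw [← Finset.mul_prod_erase s _ hp₀, hga]
      congr 1
      refine Finset.prod_congr rfl fun p hp => ?_
      rw [Function.update_of_ne (Finset.ne_of_mem_erase hp)]
  rw [hbij, ← Finset.mul_sum]
  have hk := key_sum c N (s.erase p₀) (t - a) (Nat.le_trans (Nat.sub_le t a) htN)
  rw [hk]

@[to_additive]
lemma diag_prod {n : ℕ} {M : Type*} [CommMonoid M] (f : Fin n × Fin n → M) :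
    ∏ p ∈ univ.filter (fun p : Fin n × Fin n => p.1 = p.2), f p = ∏ l, f (l, l) := by
  refine Finset.prod_nbij' (fun p => p.1) (fun l => (l, l)) ?_ ?_ ?_ ?_ ?_
  · intro p hp; exact Finset.mem_univ _
  · intro l hl; simp
  · intro p hp
    simp only [mem_filter, mem_univ, true_and] at hp
    ext <;> simp [hp]
  · intro l hl; rfl
  · intro p hp
    simp only [mem_filter, mem_univ, true_and] at hp
    congr 1
    ext <;> simp [hp]

@[to_additive]
lemma split_prod {n : ℕ} {M : Type*} [CommMonoid M] (f : Fin n × Fin n → M) :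
    ∏ p ∈ univ.filter (fun p : Fin n × Fin n => p.1 ≤ p.2), f p
    = (∏ p ∈ univ.filter (fun p : Fin n × Fin n => p.1 < p.2), f p) * ∏ l, f (l, l) := by
  rw [← diag_prod f]
  have hset : univ.filter (fun p : Fin n × Fin n => p.1 ≤ p.2)
      = univ.filter (fun p : Fin n × Fin n => p.1 < p.2)
        ∪ univ.filter (fun p : Fin n × Fin n => p.1 = p.2) := by
    ext p
    simp [le_iff_lt_or_eq]
  have hdisj : Disjoint (univ.filter (fun p : Fin n × Fin n => p.1 < p.2))
      (univ.filter (fun p : Fin n × Fin n => p.1 = p.2)) := by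
    rw [Finset.disjoint_left]
    intro p hp hq
    simp only [mem_filter, mem_univ, true_and] at hp hq
    exact absurd hq (ne_of_lt hp)
  rw [hset, Finset.prod_union hdisj]

lemma main_red (n m : ℕ) (Ξ : Fin n × Fin n → ℕ) (p₀ : Fin n × Fin n) (hle : p₀.1 ≤ p₀.2)
    (a : ℕ) (ham : a ≤ m) (v w : ℕ) (hv : v = if p₀.1 = p₀.2 then 2 * a else a)
    (hw : w = if p₀.1 = p₀.2 then Ξ p₀ else 2 * Ξ p₀) :
    ∑ A ∈ (Fintype.piFinset fun _ : Fin n × Fin n => Finset.range (2 * m + 1)).filter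
        (fun A => (∀ i j, A (i, j) = A (j, i)) ∧ (∀ l, 2 ∣ A (l, l)) ∧
          (∑ p ∈ Finset.univ.filter (fun p : Fin n × Fin n => p.1 < p.2), A p)
            + (∑ l, A (l, l) / 2) = m ∧ A p₀ = v),
      (∏ p ∈ Finset.univ.filter (fun p : Fin n × Fin n => p.1 < p.2),
          (2 * Ξ p).choose (A p))
        * ∏ l, (Ξ (l, l)).choose (A (l, l) / 2)
    = (w.choose a)
        * ((∑ p ∈ (Finset.univ.filter (fun p : Fin n × Fin n => p.1 ≤ p.2)).erase p₀,
            (if p.1 = p.2 then Ξ p else 2 * Ξ p)).choose (m - a)) := by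
  classical
  subst hv hw
  set D : Finset (Fin n × Fin n) := univ.filter (fun p : Fin n × Fin n => p.1 ≤ p.2) with hD
  set c : Fin n × Fin n → ℕ := fun p => if p.1 = p.2 then Ξ p else 2 * Ξ p with hc
  have hp₀D : p₀ ∈ D := by simp [hD, hle]
  have hbij :
      ∑ A ∈ (Fintype.piFinset fun _ : Fin n × Fin n => Finset.range (2 * m + 1)).filter
          (fun A => (∀ i j, A (i, j) = A (j, i)) ∧ (∀ l, 2 ∣ A (l, l)) ∧
            (∑ p ∈ Finset.univ.filter (fun p : Fin n × Fin n => p.1 < p.2), A p)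
              + (∑ l, A (l, l) / 2) = m ∧ A p₀ = (if p₀.1 = p₀.2 then 2 * a else a)),
        (∏ p ∈ Finset.univ.filter (fun p : Fin n × Fin n => p.1 < p.2),
            (2 * Ξ p).choose (A p))
          * ∏ l, (Ξ (l, l)).choose (A (l, l) / 2)
      = ∑ g ∈ (Fintype.piFinset fun _ : Fin n × Fin n => Finset.range (2 * m + 1)).filter
          (fun g => (∀ p ∉ D, g p = 0) ∧ ∑ p ∈ D, g p = m ∧ g p₀ = a),
        ∏ p ∈ D, (c p).choose (g p) := by
    refine Finset.sum_bij'
      (fun (A : Fin n × Fin n → ℕ) (_ : A ∈ _) =>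
        fun p : Fin n × Fin n => if p.1 = p.2 then A p / 2 else if p.1 < p.2 then A p else 0)
      (fun (g : Fin n × Fin n → ℕ) (_ : g ∈ _) =>
        fun p : Fin n × Fin n => if p.1 = p.2 then 2 * g p else
          if p.1 < p.2 then g p else g (p.2, p.1))
      ?_ ?_ ?_ ?_ ?_
    · rintro A hA
      simp only [mem_filter, Fintype.mem_piFinset, mem_range] at hA
      obtain ⟨hpi, hsym, heven, hcount, hA0⟩ := hA
      simp only [mem_filter, Fintype.mem_piFinset, mem_range]
      refine ⟨fun p => ?_, fun p hp => ?_, ?_, ?_⟩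
      · have := hpi p; split_ifs <;> omega
      · simp only [hD, mem_filter, mem_univ, true_and] at hp
        split_ifs with h1 h2
        · exact absurd h1.le hp
        · exact absurd h2.le hp
        · rfl
      · rw [split_sum]
        have h1 : ∑ p ∈ univ.filter (fun p : Fin n × Fin n => p.1 < p.2),
            (if p.1 = p.2 then A p / 2 else if p.1 < p.2 then A p else 0) =
            ∑ p ∈ univ.filter (fun p : Fin n × Fin n => p.1 < p.2), A p := by
          refine Finset.sum_congr rfl fun p hp => ?_
          simp only [mem_filter, mem_univ, true_and] at hp
          rw [if_neg (ne_of_lt hp), if_pos hp]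
        have h2 : ∑ l : Fin n,
            (if (l, l).1 = (l, l).2 then A (l, l) / 2 else if (l, l).1 < (l, l).2 then A (l, l) else 0) =
            ∑ l : Fin n, A (l, l) / 2 := by
          refine Finset.sum_congr rfl fun l _ => ?_
          rw [if_pos rfl]
        rw [h1, h2, hcount]
      · by_cases h : p₀.1 = p₀.2
        · rw [if_pos h, hA0, if_pos h]
          omega
        · rw [if_neg h, if_pos (lt_of_le_of_ne hle h), hA0, if_neg h]
    · rintro g hg
      simp only [mem_filter, Fintype.mem_piFinset, mem_range] at hg
      obtain ⟨gpi, gsupp, gsum, gp₀⟩ := hg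
      have gle : ∀ p ∈ D, g p ≤ m := by
        intro p hp
        calc g p ≤ ∑ q ∈ D, g q := Finset.single_le_sum (fun q _ => Nat.zero_le (g q)) hp
        _ = m := gsum
      simp only [mem_filter, Fintype.mem_piFinset, mem_range]
      refine ⟨fun p => ?_, fun i j => ?_, fun l => ?_, ?_, ?_⟩
      · split_ifs with h1 h2
        · have hpD : p ∈ D := by simp [hD, h1.le]
          have := gle p hpD
          omega
        · exact gpi p
        · exact gpi (p.2, p.1)
      · rcases lt_trichotomy i j with h | h | h
        · rw [if_neg (ne_of_lt h), if_pos h, if_neg (ne_of_gt h : (j ≠ i)), if_neg (not_lt.2 h.le)]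
        · subst h; rfl
        · rw [if_neg (ne_of_gt h), if_neg (not_lt.2 h.le), if_neg (ne_of_lt h), if_pos h]
      · simp
      · have h1 : ∑ p ∈ univ.filter (fun p : Fin n × Fin n => p.1 < p.2),
            (if p.1 = p.2 then 2 * g p else if p.1 < p.2 then g p else g (p.2, p.1)) =
            ∑ p ∈ univ.filter (fun p : Fin n × Fin n => p.1 < p.2), g p := by
          refine Finset.sum_congr rfl fun p hp => ?_
          simp only [mem_filter, mem_univ, true_and] at hp
          rw [if_neg (ne_of_lt hp), if_pos hp]
        rw [h1]
        trans (∑ p ∈ univ.filter (fun p : Fin n × Fin n => p.1 < p.2), g p)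
            + ∑ l : Fin n, g (l, l)
        · congr 1
          refine Finset.sum_congr rfl fun l _ => ?_
          simp
        · rw [← split_sum]
          exact gsum
      · by_cases h : p₀.1 = p₀.2
        · rw [if_pos h, if_pos h, gp₀]
        · rw [if_neg h, if_pos (lt_of_le_of_ne hle h), if_neg h, gp₀]
    · rintro A hA
      simp only [mem_filter, Fintype.mem_piFinset, mem_range] at hA
      obtain ⟨hpi, hsym, heven, hcount, hA0⟩ := hA
      funext p
      obtain ⟨i, j⟩ := p
      dsimp only
      rcases lt_trichotomy i j with h | h | h
      · rw [if_neg (ne_of_lt h), if_pos h, if_neg (ne_of_lt h), if_pos h]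
      · subst h
        rw [if_pos rfl, if_pos rfl]
        exact Nat.mul_div_cancel' (heven i)
      · rw [if_neg (ne_of_gt h), if_neg (not_lt.2 h.le), if_neg (ne_of_lt h), if_pos h,
          hsym j i]
    · rintro g hg
      simp only [mem_filter, Fintype.mem_piFinset, mem_range] at hg
      obtain ⟨gpi, gsupp, gsum, gp₀⟩ := hg
      funext p
      obtain ⟨i, j⟩ := p
      dsimp only
      rcases lt_trichotomy i j with h | h | h
      · rw [if_neg (ne_of_lt h), if_pos h, if_neg (ne_of_lt h), if_pos h]
      · subst h
        rw [if_pos rfl, if_pos rfl]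
        omega
      · rw [if_neg (ne_of_gt h), if_neg (not_lt.2 h.le)]
        exact (gsupp (i, j) (by simp [hD, not_le.2 h])).symm
    · rintro A hA
      simp only [mem_filter, Fintype.mem_piFinset, mem_range] at hA
      obtain ⟨hpi, hsym, heven, hcount, hA0⟩ := hA
      dsimp only
      rw [split_prod]
      congr 1
      · refine Finset.prod_congr rfl fun p hp => ?_
        simp only [mem_filter, mem_univ, true_and] at hp
        simp only [hc]
        rw [if_neg (ne_of_lt hp), if_neg (ne_of_lt hp), if_pos hp]
      · refine Finset.prod_congr rfl fun l _ => ?_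
        simp only [hc]
        simp
  rw [hbij]
  have h2m : m ≤ 2 * m := Nat.le_mul_of_pos_left m (Nat.succ_pos 1)
  have hk := key_sum_fixed c (2 * m) D p₀ hp₀D m a ham h2m
  rw [hk]


/-- Marginals of the undirected soft configuration model.  For a fixed pair of
distinct vertices `i₀ ≠ j₀` and `a ≤ m`, the sum of the hypergeometric weights over
symmetric even-diagonal matrices `A` with `m` multi-edges and `A (i₀,j₀) = a` equals
`C(2Ξ_{i₀j₀}, a) * C(M − 2Ξ_{i₀j₀}, m − a)`; and for a fixed vertex `l₀` and even
`b ≤ 2m`, the corresponding sum over `A` with `A (l₀,l₀) = b` equals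
`C(Ξ_{l₀l₀}, b/2) * C(M − Ξ_{l₀l₀}, m − b/2)`. -/
theorem undirectedSoftConfigurationModel_marginals
    (n m : ℕ) (Ξ : Fin n × Fin n → ℕ) (hΞ : ∀ i j, Ξ (i, j) = Ξ (j, i))
    (M : ℕ) (hM : M = ∑ p, Ξ p)
    (i₀ j₀ : Fin n) (hij : i₀ ≠ j₀) (a : ℕ) (ha : a ≤ m)
    (l₀ : Fin n) (b : ℕ) (hb : 2 ∣ b) (hbm : b ≤ 2 * m) :
    (∑ A ∈ (Fintype.piFinset fun _ : Fin n × Fin n => Finset.range (2 * m + 1)).filter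
        (fun A => (∀ i j, A (i, j) = A (j, i)) ∧ (∀ l, 2 ∣ A (l, l)) ∧
          (∑ p ∈ Finset.univ.filter (fun p : Fin n × Fin n => p.1 < p.2), A p)
            + (∑ l, A (l, l) / 2) = m ∧ A (i₀, j₀) = a),
      (∏ p ∈ Finset.univ.filter (fun p : Fin n × Fin n => p.1 < p.2),
          (2 * Ξ p).choose (A p))
        * ∏ l, (Ξ (l, l)).choose (A (l, l) / 2)
      = (2 * Ξ (i₀, j₀)).choose a * (M - 2 * Ξ (i₀, j₀)).choose (m - a)) ∧
    (∑ A ∈ (Fintype.piFinset fun _ : Fin n × Fin n => Finset.range (2 * m + 1)).filter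
        (fun A => (∀ i j, A (i, j) = A (j, i)) ∧ (∀ l, 2 ∣ A (l, l)) ∧
          (∑ p ∈ Finset.univ.filter (fun p : Fin n × Fin n => p.1 < p.2), A p)
            + (∑ l, A (l, l) / 2) = m ∧ A (l₀, l₀) = b),
      (∏ p ∈ Finset.univ.filter (fun p : Fin n × Fin n => p.1 < p.2),
          (2 * Ξ p).choose (A p))
        * ∏ l, (Ξ (l, l)).choose (A (l, l) / 2)
      = (Ξ (l₀, l₀)).choose (b / 2) * (M - Ξ (l₀, l₀)).choose (m - b / 2)) := by
  classical
  have hswap : ∑ p ∈ univ.filter (fun p : Fin n × Fin n => ¬ p.1 ≤ p.2), Ξ p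
      = ∑ p ∈ univ.filter (fun p : Fin n × Fin n => p.1 < p.2), Ξ p := by
    refine Finset.sum_nbij' (fun p => (p.2, p.1)) (fun p => (p.2, p.1)) ?_ ?_ ?_ ?_ ?_
    · intro p hp
      simp only [mem_filter, mem_univ, true_and, not_le] at hp ⊢
      exact hp
    · intro p hp
      simp only [mem_filter, mem_univ, true_and, not_le] at hp ⊢
      exact hp
    · intro p hp; rfl
    · intro p hp; rfl
    · intro p hp; exact hΞ p.1 p.2
  have hM2 : ∑ p ∈ univ.filter (fun p : Fin n × Fin n => p.1 ≤ p.2),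
      (if p.1 = p.2 then Ξ p else 2 * Ξ p) = M := by
    rw [split_sum]
    have hsplitle := split_sum (f := fun p : Fin n × Fin n => Ξ p)
    have hfilter := Finset.sum_filter_add_sum_filter_not univ
      (fun p : Fin n × Fin n => p.1 ≤ p.2) Ξ
    have h3 : ∑ p ∈ univ.filter (fun p : Fin n × Fin n => p.1 < p.2), 2 * Ξ p
        = (∑ p ∈ univ.filter (fun p : Fin n × Fin n => p.1 < p.2), Ξ p)
          + ∑ p ∈ univ.filter (fun p : Fin n × Fin n => p.1 < p.2), Ξ p := by
      rw [← Finset.sum_add_distrib]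
      exact Finset.sum_congr rfl fun p _ => two_mul (Ξ p)
    have hstep : (∑ p ∈ univ.filter (fun p : Fin n × Fin n => p.1 < p.2),
          (if p.1 = p.2 then Ξ p else 2 * Ξ p))
        + (∑ l : Fin n, (if ((l, l) : Fin n × Fin n).1 = ((l, l) : Fin n × Fin n).2
            then Ξ (l, l) else 2 * Ξ (l, l)))
        = (∑ p ∈ univ.filter (fun p : Fin n × Fin n => p.1 < p.2), 2 * Ξ p)
          + ∑ l : Fin n, Ξ (l, l) := by
      congr 1
      · exact Finset.sum_congr rfl fun p hp =>
          if_neg (ne_of_lt (mem_filter.1 hp).2)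
      · exact Finset.sum_congr rfl fun l _ => if_pos rfl
    rw [hstep, h3]
    clear hΞ hstep
    omega
  constructor
  · -- off-diagonal marginal
    by_cases hlt : i₀ < j₀
    · have hmr := main_red n m Ξ (i₀, j₀) hlt.le a ha a (2 * Ξ (i₀, j₀))
        (by simp [hij]) (by simp [hij])
      rw [hmr]
      have hp₀D : ((i₀, j₀) : Fin n × Fin n)
          ∈ univ.filter (fun p : Fin n × Fin n => p.1 ≤ p.2) := by
        simp [hlt.le]
      have hadd : 2 * Ξ (i₀, j₀)
          + ∑ p ∈ (univ.filter (fun p : Fin n × Fin n => p.1 ≤ p.2)).erase (i₀, j₀),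
            (if p.1 = p.2 then Ξ p else 2 * Ξ p)
          = ∑ p ∈ univ.filter (fun p : Fin n × Fin n => p.1 ≤ p.2),
            (if p.1 = p.2 then Ξ p else 2 * Ξ p) := by
        simpa [hij] using Finset.add_sum_erase _
          (fun p : Fin n × Fin n => if p.1 = p.2 then Ξ p else 2 * Ξ p) hp₀D
      have herase : ∑ p ∈ (univ.filter (fun p : Fin n × Fin n => p.1 ≤ p.2)).erase (i₀, j₀),
          (if p.1 = p.2 then Ξ p else 2 * Ξ p) = M - 2 * Ξ (i₀, j₀) :=
        Nat.eq_sub_of_add_eq' (hadd.trans hM2)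
      rw [herase]
    · have hjlt : j₀ < i₀ := (Ne.symm hij).lt_of_le (not_lt.1 hlt)
      have hmr := main_red n m Ξ (j₀, i₀) hjlt.le a ha a (2 * Ξ (i₀, j₀))
        (by simp [Ne.symm hij]) (by simp [Ne.symm hij, hΞ j₀ i₀])
      have hset : (Fintype.piFinset fun _ : Fin n × Fin n => Finset.range (2 * m + 1)).filter
          (fun A => (∀ i j, A (i, j) = A (j, i)) ∧ (∀ l, 2 ∣ A (l, l)) ∧
            (∑ p ∈ Finset.univ.filter (fun p : Fin n × Fin n => p.1 < p.2), A p)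
              + (∑ l, A (l, l) / 2) = m ∧ A (i₀, j₀) = a)
          = (Fintype.piFinset fun _ : Fin n × Fin n => Finset.range (2 * m + 1)).filter
          (fun A => (∀ i j, A (i, j) = A (j, i)) ∧ (∀ l, 2 ∣ A (l, l)) ∧
            (∑ p ∈ Finset.univ.filter (fun p : Fin n × Fin n => p.1 < p.2), A p)
              + (∑ l, A (l, l) / 2) = m ∧ A (j₀, i₀) = a) := by
        ext A
        simp only [mem_filter]
        constructor
        · rintro ⟨h0, h1, h2, h3, h4⟩
          exact ⟨h0, h1, h2, h3, (h1 j₀ i₀).trans h4⟩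
        · rintro ⟨h0, h1, h2, h3, h4⟩
          exact ⟨h0, h1, h2, h3, (h1 i₀ j₀).trans h4⟩
      rw [hset, hmr]
      have hp₀D : ((j₀, i₀) : Fin n × Fin n)
          ∈ univ.filter (fun p : Fin n × Fin n => p.1 ≤ p.2) := by
        simp [hjlt.le]
      have hadd : 2 * Ξ (i₀, j₀)
          + ∑ p ∈ (univ.filter (fun p : Fin n × Fin n => p.1 ≤ p.2)).erase (j₀, i₀),
            (if p.1 = p.2 then Ξ p else 2 * Ξ p)
          = ∑ p ∈ univ.filter (fun p : Fin n × Fin n => p.1 ≤ p.2),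
            (if p.1 = p.2 then Ξ p else 2 * Ξ p) := by
        simpa [Ne.symm hij, hΞ j₀ i₀] using Finset.add_sum_erase _
          (fun p : Fin n × Fin n => if p.1 = p.2 then Ξ p else 2 * Ξ p) hp₀D
      have herase : ∑ p ∈ (univ.filter (fun p : Fin n × Fin n => p.1 ≤ p.2)).erase (j₀, i₀),
          (if p.1 = p.2 then Ξ p else 2 * Ξ p) = M - 2 * Ξ (i₀, j₀) :=
        Nat.eq_sub_of_add_eq' (hadd.trans hM2)
      rw [herase]
  · -- diagonal marginal
    have hbm' : b / 2 ≤ m := by omega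
    have hmr := main_red n m Ξ (l₀, l₀) (le_refl l₀) (b / 2) hbm' b (Ξ (l₀, l₀))
      (by simp [Nat.mul_div_cancel' hb]) (by simp)
    rw [hmr]
    have hp₀D : ((l₀, l₀) : Fin n × Fin n)
        ∈ univ.filter (fun p : Fin n × Fin n => p.1 ≤ p.2) := by simp
    have hadd : Ξ (l₀, l₀)
        + ∑ p ∈ (univ.filter (fun p : Fin n × Fin n => p.1 ≤ p.2)).erase (l₀, l₀),
          (if p.1 = p.2 then Ξ p else 2 * Ξ p)
        = ∑ p ∈ univ.filter (fun p : Fin n × Fin n => p.1 ≤ p.2),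
          (if p.1 = p.2 then Ξ p else 2 * Ξ p) := by
      simpa using Finset.add_sum_erase _
        (fun p : Fin n × Fin n => if p.1 = p.2 then Ξ p else 2 * Ξ p) hp₀D
    have herase : ∑ p ∈ (univ.filter (fun p : Fin n × Fin n => p.1 ≤ p.2)).erase (l₀, l₀),
        (if p.1 = p.2 then Ξ p else 2 * Ξ p) = M - Ξ (l₀, l₀) :=
      Nat.eq_sub_of_add_eq' (hadd.trans hM2)
    rw [herase]
end

section
/- Let n, m be natural numbers with m > 0, let Ξ : Fin n × Fin n → ℕ be symmetric with M = ∑_{i,j} Ξ_ij > 0, assume m ≤ M, and fix a pair of vertices (i₀, j₀). Then, working in ℚ, the expected multiplicity of the edge (i₀, j₀) under the undirected soft configuration model equals 2m·Ξ_{i₀j₀}/M; that is, (∑_{A ∈ S} A_{i₀j₀} · w(A)) / C(M, m) = 2m · Ξ_{i₀j₀} / M, where S is the set of symmetric matrices A : Fin n × Fin n → ℕ with even diagonals and ∑_{i<j} A_ij + ∑_l A_ll/2 = m, and w(A) = ∏_{i<j} C(2Ξ_ij, A_ij) · ∏_l C(Ξ_ll, A_ll/2). -/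
open Finset

lemma vand_pi {ι : Type*} [DecidableEq ι] (N : ι → ℕ) (s : Finset ι) :
    ∀ m : ℕ, ∑ f ∈ s.piAntidiag m, ∏ i ∈ s, (N i).choose (f i)
      = (∑ i ∈ s, N i).choose m := by
  induction s using Finset.cons_induction with
  | empty => intro m; rcases m with _ | m <;> simp
  | cons a s ha ih =>
    intro m
    rw [Finset.piAntidiag_cons ha, Finset.sum_disjiUnion]
    have key : ∀ p ∈ Finset.HasAntidiagonal.antidiagonal m,
        (∑ f ∈ (s.piAntidiag p.2).map (addRightEmbedding fun t => if t = a then p.1 else 0),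
          ∏ j ∈ Finset.cons a s ha, (N j).choose (f j))
        = (N a).choose p.1 * (∑ j ∈ s, N j).choose p.2 := by
      intro p hp
      rw [Finset.sum_map, ← ih p.2, Finset.mul_sum]
      refine Finset.sum_congr rfl fun g hg => ?_
      obtain ⟨hgsum, hgsupp⟩ := Finset.mem_piAntidiag.mp hg
      have hga : g a = 0 := by
        by_contra h; exact ha (hgsupp a h)
      rw [Finset.prod_cons]
      simp only [addRightEmbedding_apply, Pi.add_apply, hga, zero_add, if_true]
      congr 1
      refine Finset.prod_congr rfl fun j hj => ?_
      have : j ≠ a := fun h => ha (h ▸ hj)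
      rw [if_neg this, add_zero]
    rw [Finset.sum_congr rfl key, Finset.sum_cons, Nat.add_choose_eq]

lemma succ_mul_choose'_s6 (x p : ℕ) : (p + 1) * x.choose (p + 1) = x * (x - 1).choose p := by
  cases x with
  | zero => simp
  | succ x =>
    have h := Nat.add_one_mul_choose_eq x p
    simp only [Nat.succ_eq_add_one, Nat.add_sub_cancel]
    rw [h]; ring

lemma vand_two (x K m' : ℕ) :
    ∑ p ∈ Finset.HasAntidiagonal.antidiagonal (m' + 1), p.1 * (x.choose p.1 * K.choose p.2)
      = x * (x + K - 1).choose m' := by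
  rw [Finset.Nat.antidiagonal_succ, Finset.sum_cons, Finset.sum_map]
  simp only [zero_mul, zero_add, Function.Embedding.coe_prodMap, Function.Embedding.coeFn_mk,
    Function.Embedding.refl_apply, Prod.map_fst, Prod.map_snd]
  cases x with
  | zero => simp
  | succ x =>
    have : ∀ p ∈ Finset.HasAntidiagonal.antidiagonal m',
        (p.1 + 1) * ((x+1).choose (p.1 + 1) * K.choose p.2)
          = (x + 1) * (x.choose p.1 * K.choose p.2) := by
      intro p _
      rw [← mul_assoc, succ_mul_choose'_s6 (x+1) p.1, Nat.add_sub_cancel, mul_assoc]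
    rw [Finset.sum_congr rfl this, ← Finset.mul_sum, ← Nat.add_choose_eq]
    congr 2
    omega

lemma weighted_vand_pi {ι : Type*} [DecidableEq ι] (N : ι → ℕ) (s : Finset ι)
    (i₀ : ι) (hi₀ : i₀ ∈ s) (m' : ℕ) :
    ∑ f ∈ s.piAntidiag (m' + 1), f i₀ * ∏ i ∈ s, (N i).choose (f i)
      = N i₀ * ((∑ i ∈ s, N i) - 1).choose m' := by
  obtain ⟨t, ht, rfl⟩ : ∃ t, ∃ (h : i₀ ∉ t), s = Finset.cons i₀ t h :=
    ⟨s.erase i₀, Finset.notMem_erase _ _, by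
      rw [Finset.cons_eq_insert, Finset.insert_erase hi₀]⟩
  rw [Finset.piAntidiag_cons ht, Finset.sum_disjiUnion]
  have key : ∀ p ∈ Finset.HasAntidiagonal.antidiagonal (m' + 1),
      (∑ f ∈ (t.piAntidiag p.2).map (addRightEmbedding fun u => if u = i₀ then p.1 else 0),
        f i₀ * ∏ j ∈ Finset.cons i₀ t ht, (N j).choose (f j))
      = p.1 * ((N i₀).choose p.1 * (∑ j ∈ t, N j).choose p.2) := by
    intro p hp
    rw [Finset.sum_map]
    have hface : ∀ g ∈ t.piAntidiag p.2,
        ((addRightEmbedding fun u => if u = i₀ then p.1 else 0) g) i₀ *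
          ∏ j ∈ Finset.cons i₀ t ht,
            (N j).choose (((addRightEmbedding fun u => if u = i₀ then p.1 else 0) g) j)
        = p.1 * ((N i₀).choose p.1 * ∏ j ∈ t, (N j).choose (g j)) := by
      intro g hg
      obtain ⟨hgsum, hgsupp⟩ := Finset.mem_piAntidiag.mp hg
      have hga : g i₀ = 0 := by by_contra h; exact ht (hgsupp i₀ h)
      rw [Finset.prod_cons]
      simp only [addRightEmbedding_apply, Pi.add_apply, hga, zero_add, if_true]
      have hrest : ∀ j ∈ t,
          (N j).choose (g j + if j = i₀ then p.1 else 0) = (N j).choose (g j) := by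
        intro j hj
        have : j ≠ i₀ := fun h => ht (h ▸ hj)
        rw [if_neg this, add_zero]
      rw [Finset.prod_congr rfl hrest]
    rw [Finset.sum_congr rfl hface, ← Finset.mul_sum, ← Finset.mul_sum, vand_pi]
  rw [Finset.sum_congr rfl key, vand_two, Finset.sum_cons]

abbrev SCMIdx (n : ℕ) : Type := {p : Fin n × Fin n // p.1 < p.2} ⊕ Fin n

def SCMN (n : ℕ) (Ξ : Fin n × Fin n → ℕ) : SCMIdx n → ℕ :=
  Sum.elim (fun p => 2 * Ξ p.1) (fun l => Ξ (l, l))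

def SCMinv (n : ℕ) (f : SCMIdx n → ℕ) : Fin n × Fin n → ℕ := fun p =>
  if h : p.1 < p.2 then f (Sum.inl ⟨p, h⟩)
  else if h' : p.2 < p.1 then f (Sum.inl ⟨(p.2, p.1), h'⟩)
  else 2 * f (Sum.inr p.1)

def SCMfwd (n : ℕ) (A : Fin n × Fin n → ℕ) : SCMIdx n → ℕ :=
  Sum.elim (fun p => A p.1) (fun l => A (l, l) / 2)

lemma elim_sum_eq {n : ℕ} (g : SCMIdx n → ℕ) (G : Fin n × Fin n → ℕ)
    (hG : ∀ (p : {p : Fin n × Fin n // p.1 < p.2}), G p.1 = g (Sum.inl p)) :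
    ∑ i, g i = (∑ p ∈ Finset.univ.filter (fun p : Fin n × Fin n => p.1 < p.2), G p)
      + ∑ l, g (Sum.inr l) := by
  rw [Fintype.sum_sum_type]
  congr 1
  rw [Finset.sum_subtype (p := fun p : Fin n × Fin n => p.1 < p.2)
    (Finset.univ.filter (fun p : Fin n × Fin n => p.1 < p.2)) (by simp) G]
  exact Finset.sum_congr rfl fun p _ => (hG p).symm

lemma elim_prod_eq {n : ℕ} (g : SCMIdx n → ℕ) (G : Fin n × Fin n → ℕ)
    (hG : ∀ (p : {p : Fin n × Fin n // p.1 < p.2}), G p.1 = g (Sum.inl p)) :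
    ∏ i, g i = (∏ p ∈ Finset.univ.filter (fun p : Fin n × Fin n => p.1 < p.2), G p)
      * ∏ l, g (Sum.inr l) := by
  rw [Fintype.prod_sum_type]
  congr 1
  rw [Finset.prod_subtype (p := fun p : Fin n × Fin n => p.1 < p.2)
    (Finset.univ.filter (fun p : Fin n × Fin n => p.1 < p.2)) (by simp) G]
  exact Finset.prod_congr rfl fun p _ => (hG p).symm

lemma sum_Xi_split {n : ℕ} (Ξ : Fin n × Fin n → ℕ) (hΞ : ∀ i j, Ξ (i, j) = Ξ (j, i)) :
    ∑ p, Ξ p = 2 * (∑ p ∈ Finset.univ.filter (fun p : Fin n × Fin n => p.1 < p.2), Ξ p)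
      + ∑ l, Ξ (l, l) := by
  classical
  rw [← Finset.sum_filter_add_sum_filter_not Finset.univ (fun p : Fin n × Fin n => p.1 < p.2) Ξ]
  rw [← Finset.sum_filter_add_sum_filter_not
    (Finset.univ.filter (fun p : Fin n × Fin n => ¬ p.1 < p.2))
    (fun p : Fin n × Fin n => p.2 < p.1) Ξ]
  have h1 : ((Finset.univ.filter (fun p : Fin n × Fin n => ¬ p.1 < p.2)).filter
      (fun p : Fin n × Fin n => p.2 < p.1))
      = Finset.univ.filter (fun p : Fin n × Fin n => p.2 < p.1) := by
    rw [Finset.filter_filter]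
    apply Finset.filter_congr
    intro p _
    constructor
    · rintro ⟨-, h⟩; exact h
    · intro h; exact ⟨not_lt_of_gt h, h⟩
  have h2 : ∑ p ∈ Finset.univ.filter (fun p : Fin n × Fin n => p.2 < p.1), Ξ p
      = ∑ p ∈ Finset.univ.filter (fun p : Fin n × Fin n => p.1 < p.2), Ξ p := by
    refine Finset.sum_nbij' (fun p => (p.2, p.1)) (fun p => (p.2, p.1)) ?_ ?_ ?_ ?_ ?_
    · intro p hp; simp only [Finset.mem_filter, Finset.mem_univ, true_and] at hp ⊢; exact hp
    · intro p hp; simp only [Finset.mem_filter, Finset.mem_univ, true_and] at hp ⊢; exact hp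
    · intro p _; rfl
    · intro p _; rfl
    · intro p _; exact hΞ p.1 p.2
  have h3 : ∑ p ∈ ((Finset.univ.filter (fun p : Fin n × Fin n => ¬ p.1 < p.2)).filter
      (fun p : Fin n × Fin n => ¬ p.2 < p.1)), Ξ p = ∑ l, Ξ (l, l) := by
    refine Finset.sum_nbij' (fun p => p.1) (fun l => (l, l)) ?_ ?_ ?_ ?_ ?_
    · intro p _; exact Finset.mem_univ _
    · intro l _
      simp only [Finset.mem_filter, Finset.mem_univ, true_and]
      exact ⟨lt_irrefl _, lt_irrefl _⟩
    · intro p hp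
      simp only [Finset.mem_filter, Finset.mem_univ, true_and] at hp
      have h : p.1 = p.2 := le_antisymm (not_lt.mp hp.2) (not_lt.mp hp.1)
      obtain ⟨a, b⟩ := p
      simp only at h
      simp only [h]
    · intro l _; rfl
    · intro p hp
      simp only [Finset.mem_filter, Finset.mem_univ, true_and] at hp
      have h : p.1 = p.2 := le_antisymm (not_lt.mp hp.2) (not_lt.mp hp.1)
      obtain ⟨a, b⟩ := p
      simp only at h
      simp only [h]
  rw [h1, h2, h3]
  ring

set_option maxHeartbeats 1000000 in
/-- Expected multiplicity of the edge `(i₀, j₀)` under the undirected soft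
configuration model: `E[X_{i₀ j₀}] = 2 m Ξ_{i₀ j₀} / M`. -/
theorem undirectedSoftConfigurationModel_expected_edge_count
    (n m : ℕ) (hm : 0 < m) (Ξ : Fin n × Fin n → ℕ)
    (hΞ : ∀ i j, Ξ (i, j) = Ξ (j, i))
    (M : ℕ) (hM : M = ∑ p, Ξ p) (hMpos : 0 < M) (hmM : m ≤ M)
    (i₀ j₀ : Fin n) :
    (∑ A ∈ (Fintype.piFinset fun _ : Fin n × Fin n => Finset.range (2 * m + 1)).filter
        (fun A => (∀ i j, A (i, j) = A (j, i)) ∧ (∀ l, 2 ∣ A (l, l)) ∧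
          (∑ p ∈ Finset.univ.filter (fun p : Fin n × Fin n => p.1 < p.2), A p)
            + (∑ l, A (l, l) / 2) = m),
      (A (i₀, j₀) : ℚ) *
        ((∏ p ∈ Finset.univ.filter (fun p : Fin n × Fin n => p.1 < p.2),
            ((2 * Ξ p).choose (A p) : ℚ))
          * ∏ l, ((Ξ (l, l)).choose (A (l, l) / 2) : ℚ))) / (M.choose m : ℚ)
      = 2 * (m : ℚ) * (Ξ (i₀, j₀) : ℚ) / (M : ℚ) := by
  classical
  -- the total weight of the index set equals M
  have hN : ∑ i, SCMN n Ξ i = M := by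
    rw [elim_sum_eq (SCMN n Ξ) (fun p => 2 * Ξ p) (fun p => rfl), hM, sum_Xi_split Ξ hΞ,
      Finset.mul_sum]
    rfl
  -- the natural-number numerator identity
  obtain ⟨m', rfl⟩ : ∃ m', m = m' + 1 := ⟨m - 1, by omega⟩
  have hnum : (∑ A ∈ (Fintype.piFinset fun _ : Fin n × Fin n =>
        Finset.range (2 * (m' + 1) + 1)).filter
        (fun A => (∀ i j, A (i, j) = A (j, i)) ∧ (∀ l, 2 ∣ A (l, l)) ∧
          (∑ p ∈ Finset.univ.filter (fun p : Fin n × Fin n => p.1 < p.2), A p)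
            + (∑ l, A (l, l) / 2) = m' + 1),
      A (i₀, j₀) *
        ((∏ p ∈ Finset.univ.filter (fun p : Fin n × Fin n => p.1 < p.2),
            (2 * Ξ p).choose (A p))
          * ∏ l, (Ξ (l, l)).choose (A (l, l) / 2)))
      = 2 * Ξ (i₀, j₀) * (M - 1).choose m' := by
    have step1 : (∑ A ∈ (Fintype.piFinset fun _ : Fin n × Fin n =>
        Finset.range (2 * (m' + 1) + 1)).filter
        (fun A => (∀ i j, A (i, j) = A (j, i)) ∧ (∀ l, 2 ∣ A (l, l)) ∧
          (∑ p ∈ Finset.univ.filter (fun p : Fin n × Fin n => p.1 < p.2), A p)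
            + (∑ l, A (l, l) / 2) = m' + 1),
      A (i₀, j₀) *
        ((∏ p ∈ Finset.univ.filter (fun p : Fin n × Fin n => p.1 < p.2),
            (2 * Ξ p).choose (A p))
          * ∏ l, (Ξ (l, l)).choose (A (l, l) / 2)))
        = ∑ f ∈ (Finset.univ : Finset (SCMIdx n)).piAntidiag (m' + 1),
            SCMinv n f (i₀, j₀) * ∏ i, (SCMN n Ξ i).choose (f i) := by
      refine Finset.sum_nbij' (SCMfwd n) (SCMinv n) ?_ ?_ ?_ ?_ ?_
      · -- forward membership
        intro A hA
        obtain ⟨-, hsymm, heven, hsum⟩ := Finset.mem_filter.mp hA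
        rw [Finset.mem_piAntidiag]
        refine ⟨?_, fun i _ => Finset.mem_univ i⟩
        rw [show Finset.univ.sum (SCMfwd n A) = ∑ i, SCMfwd n A i from rfl,
          elim_sum_eq (SCMfwd n A) A (fun p => rfl)]
        exact hsum
      · -- backward membership
        intro f hf
        obtain ⟨hsum, -⟩ := Finset.mem_piAntidiag.mp hf
        have hfb : ∀ i, f i ≤ m' + 1 := fun i => by
          rw [← hsum]
          exact Finset.single_le_sum (fun j _ => Nat.zero_le (f j)) (Finset.mem_univ i)
        rw [Finset.mem_filter]
        refine ⟨?_, ?_, ?_, ?_⟩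
        · rw [Fintype.mem_piFinset]
          intro p
          rw [Finset.mem_range, Nat.lt_succ_iff]
          unfold SCMinv
          split_ifs with h h'
          · exact le_trans (hfb _) (by omega)
          · exact le_trans (hfb _) (by omega)
          · have := hfb (Sum.inr p.1); omega
        · intro i j
          rcases lt_trichotomy i j with h | h | h
          · show SCMinv n f (i, j) = SCMinv n f (j, i)
            unfold SCMinv
            rw [dif_pos h, dif_neg (show ¬ (j, i).1 < (j, i).2 from not_lt_of_gt h),
              dif_pos (show (j, i).2 < (j, i).1 from h)]
          · rw [h]
          · show SCMinv n f (i, j) = SCMinv n f (j, i)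
            unfold SCMinv
            rw [dif_pos h, dif_neg (show ¬ (i, j).1 < (i, j).2 from not_lt_of_gt h),
              dif_pos (show (i, j).2 < (i, j).1 from h)]
        · intro l
          show 2 ∣ SCMinv n f (l, l)
          unfold SCMinv
          rw [dif_neg (lt_irrefl l), dif_neg (lt_irrefl l)]
          exact Dvd.intro _ rfl
        · rw [show (∑ l, SCMinv n f (l, l) / 2) = ∑ l, f (Sum.inr l) from
            Finset.sum_congr rfl fun l _ => by
              show SCMinv n f (l, l) / 2 = _
              unfold SCMinv
              rw [dif_neg (lt_irrefl l), dif_neg (lt_irrefl l)]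
              exact Nat.mul_div_cancel_left _ (by norm_num)]
          rw [show (∑ p ∈ Finset.univ.filter (fun p : Fin n × Fin n => p.1 < p.2),
              SCMinv n f p) = ∑ p ∈ Finset.univ.filter
                (fun p : Fin n × Fin n => p.1 < p.2), (fun p : Fin n × Fin n =>
                  if h : p.1 < p.2 then f (Sum.inl ⟨p, h⟩) else 0) p from
            Finset.sum_congr rfl fun p hp => by
              have h := (Finset.mem_filter.mp hp).2
              show SCMinv n f p = _
              unfold SCMinv
              simp only [dif_pos h]]
          rw [← elim_sum_eq f (fun p : Fin n × Fin n =>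
            if h : p.1 < p.2 then f (Sum.inl ⟨p, h⟩) else 0)
            (fun p => by simp [p.2])]
          exact hsum
      · -- left inverse
        intro A hA
        obtain ⟨-, hsymm, heven, -⟩ := Finset.mem_filter.mp hA
        funext p
        obtain ⟨i, j⟩ := p
        show SCMinv n (SCMfwd n A) (i, j) = A (i, j)
        rcases lt_trichotomy i j with h | h | h
        · unfold SCMinv
          rw [dif_pos h]
          rfl
        · subst h
          unfold SCMinv
          rw [dif_neg (lt_irrefl i), dif_neg (lt_irrefl i)]
          exact Nat.mul_div_cancel' (heven i)
        · unfold SCMinv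
          rw [dif_neg (show ¬ (i, j).1 < (i, j).2 from not_lt_of_gt h),
            dif_pos (show (i, j).2 < (i, j).1 from h)]
          exact (hsymm j i).symm ▸ (hsymm i j).symm
      · -- right inverse
        intro f hf
        funext i
        rcases i with ⟨p, h⟩ | l
        · show SCMinv n f p = f (Sum.inl ⟨p, h⟩)
          unfold SCMinv
          rw [dif_pos h]
        · show SCMinv n f (l, l) / 2 = f (Sum.inr l)
          unfold SCMinv
          rw [dif_neg (lt_irrefl l), dif_neg (lt_irrefl l)]
          exact Nat.mul_div_cancel_left _ (by norm_num)
      · -- summand equality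
        intro A hA
        obtain ⟨-, hsymm, heven, -⟩ := Finset.mem_filter.mp hA
        have hli : SCMinv n (SCMfwd n A) = A := by
          funext p
          obtain ⟨i, j⟩ := p
          show SCMinv n (SCMfwd n A) (i, j) = A (i, j)
          rcases lt_trichotomy i j with h | h | h
          · unfold SCMinv
            rw [dif_pos h]
            rfl
          · subst h
            unfold SCMinv
            rw [dif_neg (lt_irrefl i), dif_neg (lt_irrefl i)]
            exact Nat.mul_div_cancel' (heven i)
          · unfold SCMinv
            rw [dif_neg (show ¬ (i, j).1 < (i, j).2 from not_lt_of_gt h),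
              dif_pos (show (i, j).2 < (i, j).1 from h)]
            exact (hsymm j i).symm ▸ (hsymm i j).symm
        rw [hli]
        congr 1
        rw [elim_prod_eq (fun i => (SCMN n Ξ i).choose (SCMfwd n A i))
          (fun p => (2 * Ξ p).choose (A p)) (fun p => rfl)]
        rfl
    rw [step1]
    rcases lt_trichotomy i₀ j₀ with h | h | h
    · rw [Finset.sum_congr rfl (fun f _ => by
        show SCMinv n f (i₀, j₀) * ∏ i, (SCMN n Ξ i).choose (f i)
          = f (Sum.inl ⟨(i₀, j₀), h⟩) * ∏ i, (SCMN n Ξ i).choose (f i)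
        unfold SCMinv
        rw [dif_pos h])]
      rw [weighted_vand_pi (SCMN n Ξ) Finset.univ (Sum.inl ⟨(i₀, j₀), h⟩)
        (Finset.mem_univ _) m', hN]
      rfl
    · subst h
      rw [Finset.sum_congr rfl (fun f _ => by
        show SCMinv n f (i₀, i₀) * ∏ i, (SCMN n Ξ i).choose (f i)
          = 2 * (f (Sum.inr i₀) * ∏ i, (SCMN n Ξ i).choose (f i))
        unfold SCMinv
        rw [dif_neg (lt_irrefl i₀), dif_neg (lt_irrefl i₀), mul_assoc])]
      rw [← Finset.mul_sum, weighted_vand_pi (SCMN n Ξ) Finset.univ (Sum.inr i₀)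
        (Finset.mem_univ _) m', hN]
      show 2 * (Ξ (i₀, i₀) * _) = _
      ring
    · rw [Finset.sum_congr rfl (fun f _ => by
        show SCMinv n f (i₀, j₀) * ∏ i, (SCMN n Ξ i).choose (f i)
          = f (Sum.inl ⟨(j₀, i₀), h⟩) * ∏ i, (SCMN n Ξ i).choose (f i)
        unfold SCMinv
        rw [dif_neg (show ¬ (i₀, j₀).1 < (i₀, j₀).2 from not_lt_of_gt h),
          dif_pos (show (i₀, j₀).2 < (i₀, j₀).1 from h)])]
      rw [weighted_vand_pi (SCMN n Ξ) Finset.univ (Sum.inl ⟨(j₀, i₀), h⟩)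
        (Finset.mem_univ _) m', hN]
      show 2 * Ξ (j₀, i₀) * _ = _
      rw [hΞ j₀ i₀]
  -- pass to ℚ
  have hQ : (∑ A ∈ (Fintype.piFinset fun _ : Fin n × Fin n =>
        Finset.range (2 * (m' + 1) + 1)).filter
        (fun A => (∀ i j, A (i, j) = A (j, i)) ∧ (∀ l, 2 ∣ A (l, l)) ∧
          (∑ p ∈ Finset.univ.filter (fun p : Fin n × Fin n => p.1 < p.2), A p)
            + (∑ l, A (l, l) / 2) = m' + 1),
      (A (i₀, j₀) : ℚ) *
        ((∏ p ∈ Finset.univ.filter (fun p : Fin n × Fin n => p.1 < p.2),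
            ((2 * Ξ p).choose (A p) : ℚ))
          * ∏ l, ((Ξ (l, l)).choose (A (l, l) / 2) : ℚ)))
      = ((2 * Ξ (i₀, j₀) * (M - 1).choose m' : ℕ) : ℚ) := by
    rw [← hnum]
    push_cast
    rfl
  rw [hQ]
  have key : M * ((M - 1).choose m') = (M.choose (m' + 1)) * (m' + 1) := by
    have h := Nat.add_one_mul_choose_eq (M - 1) m'
    have h2 : M - 1 + 1 = M := Nat.succ_pred_eq_of_pos hMpos
    simpa [Nat.succ_eq_add_one, h2] using h
  have hcpos : (0 : ℚ) < (M.choose (m' + 1) : ℚ) := by exact_mod_cast Nat.choose_pos hmM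
  have hMq : (0 : ℚ) < (M : ℚ) := by exact_mod_cast hMpos
  rw [div_eq_div_iff (ne_of_gt hcpos) (ne_of_gt hMq)]
  have keyQ := congrArg (fun k : ℕ => (k : ℚ)) key
  push_cast at keyQ ⊢
  linear_combination (2 * (Ξ (i₀, j₀) : ℚ)) * keyQ
end

section
/- Let n be a natural number, let Ξ : Fin n × Fin n → ℕ be symmetric (Ξ_ij = Ξ_ji), and let A : Fin n × Fin n → ℕ be symmetric with every diagonal entry A_ll even. Then the sum, over all matrices B : Fin n × Fin n → ℕ with B + Bᵀ = A, of ∏_{i,j} C(Ξ_ij, B_ij), equals ∏_{l} C(Ξ_ll, A_ll/2) · ∏_{i<j} C(2·Ξ_ij, A_ij). Consequently, the undirected projection of the directed soft configuration model with symmetric combinatorial matrix Ξ has exactly the distribution of the undirected soft configuration model: the probability assigned to an undirected graph A is ∏_{i<j} C(2Ξ_ij, A_ij) · ∏_l C(Ξ_ll, A_ll/2) / C(M, m), where M = ∑_{i,j} Ξ_ij and m is the number of multi-edges of A. -/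
open Finset

/-- The undirected projection of the directed soft configuration model with symmetric
combinatorial matrix `Ξ` is the undirected soft configuration model: for a symmetric
matrix `A` with even diagonal, the sum over all `B` with `B + Bᵀ = A` of
`∏_{i,j} C(Ξ_ij, B_ij)` equals `∏_l C(Ξ_ll, A_ll/2) * ∏_{i<j} C(2Ξ_ij, A_ij)`;
consequently the projected probability of `A` is
`∏_{i<j} C(2Ξ_ij, A_ij) * ∏_l C(Ξ_ll, A_ll/2) / C(M, m)`. -/
theorem undirectedProjection_of_softConfigurationModel
    (n : ℕ) (Ξ : Fin n × Fin n → ℕ) (hΞ : ∀ i j, Ξ (i, j) = Ξ (j, i))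
    (A : Fin n × Fin n → ℕ) (hA : ∀ i j, A (i, j) = A (j, i))
    (hdiag : ∀ l, 2 ∣ A (l, l))
    (M m : ℕ) (hM : M = ∑ p, Ξ p)
    (hm : m = (∑ p ∈ Finset.univ.filter (fun p : Fin n × Fin n => p.1 < p.2), A p)
      + ∑ l, A (l, l) / 2) :
    (∑ B ∈ (Fintype.piFinset fun p : Fin n × Fin n => Finset.range (A p + 1)).filter
        (fun B => ∀ p : Fin n × Fin n, B p + B (p.2, p.1) = A p),
      ∏ p, (Ξ p).choose (B p))
      = (∏ l, (Ξ (l, l)).choose (A (l, l) / 2)) *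
        ∏ p ∈ Finset.univ.filter (fun p : Fin n × Fin n => p.1 < p.2),
          (2 * Ξ p).choose (A p) ∧
    ((∑ B ∈ (Fintype.piFinset fun p : Fin n × Fin n => Finset.range (A p + 1)).filter
        (fun B => ∀ p : Fin n × Fin n, B p + B (p.2, p.1) = A p),
      ∏ p, ((Ξ p).choose (B p) : ℚ)) / (M.choose m : ℚ)
      = ((∏ p ∈ Finset.univ.filter (fun p : Fin n × Fin n => p.1 < p.2),
            ((2 * Ξ p).choose (A p) : ℚ))
          * ∏ l, ((Ξ (l, l)).choose (A (l, l) / 2) : ℚ)) / (M.choose m : ℚ)) := by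
  have hAs : ∀ p : Fin n × Fin n, A (p.2, p.1) = A p := fun p => by
    have := hA p.2 p.1; simpa using this
  have hΞs : ∀ p : Fin n × Fin n, Ξ (p.2, p.1) = Ξ p := fun p => by
    have := hΞ p.2 p.1; simpa using this
  have hmk : ∀ p : Fin n × Fin n, p.1 = p.2 → (p.1, p.1) = p :=
    fun p hp => Prod.ext rfl hp
  have hdiag' : ∀ p : Fin n × Fin n, p.1 = p.2 → 2 ∣ A p := by
    intro p hp
    have := hdiag p.1
    rwa [hmk p hp] at this
  set t : (Fin n × Fin n) → Finset ℕ :=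
    fun p => if p.1 < p.2 then Finset.range (A p + 1) else Finset.range 1 with ht
  set h : (p : Fin n × Fin n) → ℕ → ℕ :=
    fun p b => if p.1 < p.2 then (Ξ p).choose b * (Ξ p).choose (A p - b)
      else if p.2 < p.1 then 1 else (Ξ p).choose (A p / 2) with hh
  have key : (∑ B ∈ (Fintype.piFinset fun p : Fin n × Fin n => Finset.range (A p + 1)).filter
        (fun B => ∀ p : Fin n × Fin n, B p + B (p.2, p.1) = A p),
      ∏ p, (Ξ p).choose (B p))
      = (∏ l, (Ξ (l, l)).choose (A (l, l) / 2)) *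
        ∏ p ∈ Finset.univ.filter (fun p : Fin n × Fin n => p.1 < p.2),
          (2 * Ξ p).choose (A p) := by
    have step1 : (∑ B ∈ (Fintype.piFinset fun p : Fin n × Fin n =>
          Finset.range (A p + 1)).filter
          (fun B => ∀ p : Fin n × Fin n, B p + B (p.2, p.1) = A p),
        ∏ p, (Ξ p).choose (B p))
        = ∑ x ∈ Fintype.piFinset t, ∏ p, h p (x p) := by
      refine Finset.sum_nbij' (i := fun B => fun p => if p.1 < p.2 then B p else 0)
        (j := fun x => fun p => if p.1 < p.2 then x p
          else if p.2 < p.1 then A p - x (p.2, p.1) else A p / 2)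
        ?_ ?_ ?_ ?_ ?_
      · intro B hB
        simp only [Finset.mem_filter, Fintype.mem_piFinset, Finset.mem_range] at hB
        simp only [Fintype.mem_piFinset, ht]
        intro p
        by_cases hp : p.1 < p.2 <;> simp [hp, hB.1 p]
      · intro x hx
        simp only [Fintype.mem_piFinset, ht] at hx
        simp only [Finset.mem_filter, Fintype.mem_piFinset, Finset.mem_range]
        constructor
        · intro p
          rcases lt_trichotomy p.1 p.2 with h1 | h1 | h1
          · have := hx p; rw [if_pos h1] at this
            simp only [Finset.mem_range] at this
            simp only [if_pos h1]; omega
          · simp only [if_neg (by omega : ¬ p.1 < p.2), if_neg (by omega : ¬ p.2 < p.1)]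
            omega
          · simp only [if_neg (by omega : ¬ p.1 < p.2), if_pos h1]; omega
        · intro p
          rcases lt_trichotomy p.1 p.2 with h1 | h1 | h1
          · have hx2 := hx p; rw [if_pos h1] at hx2
            simp only [Finset.mem_range] at hx2
            simp only [if_pos h1, if_neg (by simp; omega : ¬ (p.2, p.1).1 < (p.2, p.1).2),
              if_pos (show (p.2, p.1).2 < (p.2, p.1).1 from h1)]
            have := hAs p
            simp only [Prod.mk.eta]
            omega
          · have hpp : (p.2, p.1) = p := Prod.ext h1.symm h1
            rw [hpp]
            simp only [if_neg (by omega : ¬ p.1 < p.2), if_neg (by omega : ¬ p.2 < p.1)]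
            have hd := hdiag' p h1
            omega
          · have hx2 := hx (p.2, p.1)
            rw [if_pos (show (p.2, p.1).1 < (p.2, p.1).2 from h1)] at hx2
            simp only [Finset.mem_range] at hx2
            simp only [if_neg (by omega : ¬ p.1 < p.2), if_pos h1,
              if_pos (show (p.2, p.1).1 < (p.2, p.1).2 from h1)]
            have := hAs p
            omega
      · intro B hB
        simp only [Finset.mem_filter, Fintype.mem_piFinset, Finset.mem_range] at hB
        funext p
        rcases lt_trichotomy p.1 p.2 with h1 | h1 | h1
        · simp [h1]
        · have hpp : (p.2, p.1) = p := Prod.ext h1.symm h1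
          simp only [if_neg (by omega : ¬ p.1 < p.2), if_neg (by omega : ¬ p.2 < p.1)]
          have hc := hB.2 p
          rw [hpp] at hc
          have hd := hdiag' p h1
          omega
        · simp only [if_neg (by omega : ¬ p.1 < p.2), if_pos h1,
            if_pos (show (p.2, p.1).1 < (p.2, p.1).2 from h1)]
          have hc := hB.2 (p.2, p.1)
          simp only [Prod.mk.eta] at hc
          have := hAs p
          omega
      · intro x hx
        simp only [Fintype.mem_piFinset, ht] at hx
        funext p
        by_cases h1 : p.1 < p.2
        · simp [h1]
        · have := hx p; rw [if_neg h1] at this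
          simp only [Finset.mem_range, Nat.lt_one_iff] at this
          simp [h1, this]
      · intro B hB
        simp only [Finset.mem_filter, Fintype.mem_piFinset, Finset.mem_range] at hB
        -- split each side into upper / lower / diagonal pieces
        have lhs_eq : (∏ p, (Ξ p).choose (B p))
            = (∏ p, if p.1 < p.2 then (Ξ p).choose (B p) else 1)
              * ((∏ p, if p.2 < p.1 then (Ξ p).choose (B p) else 1)
                * (∏ p, if p.1 = p.2 then (Ξ p).choose (B p) else 1)) := by
          rw [← Finset.prod_mul_distrib, ← Finset.prod_mul_distrib]
          refine Finset.prod_congr rfl ?_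
          intro p _
          rcases lt_trichotomy p.1 p.2 with h1 | h1 | h1
          · rw [if_pos h1, if_neg (by omega : ¬ p.2 < p.1),
              if_neg (by omega : ¬ p.1 = p.2)]; ring
          · rw [if_neg (by omega : ¬ p.1 < p.2), if_neg (by omega : ¬ p.2 < p.1),
              if_pos h1]; ring
          · rw [if_neg (by omega : ¬ p.1 < p.2), if_pos h1,
              if_neg (by omega : ¬ p.1 = p.2)]; ring
        have rhs_eq : (∏ p, h p (if p.1 < p.2 then B p else 0))
            = (∏ p, if p.1 < p.2 then (Ξ p).choose (B p) else 1)
              * ((∏ p, if p.1 < p.2 then (Ξ p).choose (A p - B p) else 1)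
                * (∏ p, if p.1 = p.2 then (Ξ p).choose (A p / 2) else 1)) := by
          rw [← Finset.prod_mul_distrib, ← Finset.prod_mul_distrib]
          refine Finset.prod_congr rfl ?_
          intro p _
          rcases lt_trichotomy p.1 p.2 with h1 | h1 | h1
          · simp only [hh, if_pos h1, if_neg (by omega : ¬ p.2 < p.1),
              if_neg (by omega : ¬ p.1 = p.2)]; ring
          · simp only [hh, if_neg (by omega : ¬ p.1 < p.2),
              if_neg (by omega : ¬ p.2 < p.1), if_pos h1]; ring
          · simp only [hh, if_neg (by omega : ¬ p.1 < p.2), if_pos h1,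
              if_neg (by omega : ¬ p.1 = p.2)]; ring
        rw [lhs_eq, rhs_eq]
        congr 1
        congr 1
        · -- lower product = upper product of complements, via swap
          refine Fintype.prod_equiv (Equiv.prodComm (Fin n) (Fin n)) _ _ ?_
          intro p
          simp only [Equiv.prodComm_apply, Prod.swap]
          by_cases h1 : p.2 < p.1
          · rw [if_pos h1]; simp only [h1, ↓reduceIte]
            have hc : B (p.2, p.1) + B p = A (p.2, p.1) := hB.2 (p.2, p.1)
            have h2 := hAs p
            have h3 := hΞs p
            rw [h3]
            congr 1
            omega
          · rw [if_neg h1]; simp only [h1, ↓reduceIte]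
        · refine Finset.prod_congr rfl ?_
          intro p _
          by_cases h1 : p.1 = p.2
          · rw [if_pos h1, if_pos h1]
            have hpp : (p.2, p.1) = p := Prod.ext h1.symm h1
            have hc := hB.2 p
            rw [hpp] at hc
            have hd := hdiag' p h1
            congr 1
            omega
          · rw [if_neg h1, if_neg h1]
    rw [step1, ← Finset.prod_univ_sum]
    have col : ∀ p : Fin n × Fin n, (∑ b ∈ t p, h p b)
        = (if p.1 = p.2 then (Ξ p).choose (A p / 2) else 1)
          * (if p.1 < p.2 then (2 * Ξ p).choose (A p) else 1) := by
      intro p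
      rcases lt_trichotomy p.1 p.2 with h1 | h1 | h1
      · have hne : ¬ p.1 = p.2 := ne_of_lt h1
        have htp : t p = Finset.range (A p + 1) := by
          simp only [ht]; rw [if_pos h1]
        have hhp : ∀ b, h p b = (Ξ p).choose b * (Ξ p).choose (A p - b) := fun b => by
          simp only [hh]; rw [if_pos h1]
        rw [htp, Finset.sum_congr rfl (fun b _ => hhp b), if_neg hne,
          if_pos h1, one_mul, two_mul, Nat.add_choose_eq,
          Finset.Nat.sum_antidiagonal_eq_sum_range_succ_mk]
      · have hn1 : ¬ p.1 < p.2 := by rw [h1]; exact lt_irrefl _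
        have hn2 : ¬ p.2 < p.1 := by rw [h1]; exact lt_irrefl _
        have htp : t p = Finset.range 1 := by
          simp only [ht]; rw [if_neg hn1]
        have hhp : h p 0 = (Ξ p).choose (A p / 2) := by
          simp only [hh]
          rw [if_neg hn1, if_neg hn2]
        rw [htp, Finset.sum_range_one, hhp, if_pos h1, if_neg hn1, mul_one]
      · have hn1 : ¬ p.1 < p.2 := lt_asymm h1
        have hne : ¬ p.1 = p.2 := (ne_of_lt h1).symm
        have htp : t p = Finset.range 1 := by
          simp only [ht]; rw [if_neg hn1]
        have hhp : h p 0 = 1 := by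
          simp only [hh]
          rw [if_neg hn1, if_pos h1]
        rw [htp, Finset.sum_range_one, hhp, if_neg hne, if_neg hn1, one_mul]
    rw [Finset.prod_congr rfl (fun p _ => col p), Finset.prod_mul_distrib]
    congr 1
    · rw [← Finset.prod_filter]
      refine Finset.prod_nbij' (i := fun p => p.1) (j := fun l => (l, l)) ?_ ?_ ?_ ?_ ?_
      · intro p _; exact Finset.mem_univ _
      · intro l _; simp
      · intro p hp
        simp only [Finset.mem_filter] at hp
        exact Prod.ext rfl hp.2
      · intro l _; rfl
      · intro p hp
        simp only [Finset.mem_filter] at hp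
        rw [hmk p hp.2]
    · rw [← Finset.prod_filter]
  refine ⟨key, ?_⟩
  have cast_eq : (∑ B ∈ (Fintype.piFinset fun p : Fin n × Fin n =>
        Finset.range (A p + 1)).filter
        (fun B => ∀ p : Fin n × Fin n, B p + B (p.2, p.1) = A p),
      ∏ p, ((Ξ p).choose (B p) : ℚ))
      = ((∑ B ∈ (Fintype.piFinset fun p : Fin n × Fin n => Finset.range (A p + 1)).filter
        (fun B => ∀ p : Fin n × Fin n, B p + B (p.2, p.1) = A p),
      ∏ p, (Ξ p).choose (B p) : ℕ) : ℚ) := by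
    push_cast
    rfl
  rw [cast_eq, key]
  push_cast
  ring
end

section
/- Let m and M be natural numbers with m < M. Then the real integral ∫₀¹ (1 − z^{1/(M−m)})^m dz equals 1 / C(M, m), the reciprocal of the binomial coefficient. -/
open intervalIntegral Real MeasureTheory Nat

lemma beta_nat_integral (a b : ℕ) :
    ∫ x in (0:ℝ)..1, x ^ a * (1 - x) ^ b
      = (a ! * b ! : ℝ) / ((a + b + 1)! : ℝ) := by
  have h1 : Complex.betaIntegral (a + 1) (b + 1)
      = ((∫ x in (0:ℝ)..1, x ^ a * (1 - x) ^ b : ℝ) : ℂ) := by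
    rw [Complex.betaIntegral, ← intervalIntegral.integral_ofReal]
    refine intervalIntegral.integral_congr fun x hx => ?_
    rw [add_sub_cancel_right, add_sub_cancel_right, Complex.cpow_natCast,
      Complex.cpow_natCast]
    push_cast
    ring
  have h2 := Complex.Gamma_mul_Gamma_eq_betaIntegral
    (s := (a : ℂ) + 1) (t := (b : ℂ) + 1) (by simp; positivity) (by simp; positivity)
  rw [h1] at h2
  have hga : Complex.Gamma ((a : ℂ) + 1) = (a ! : ℂ) := Complex.Gamma_nat_eq_factorial a
  have hgb : Complex.Gamma ((b : ℂ) + 1) = (b ! : ℂ) := Complex.Gamma_nat_eq_factorial b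
  have hgab : Complex.Gamma ((a : ℂ) + 1 + ((b : ℂ) + 1)) = ((a + b + 1)! : ℂ) := by
    have : ((a : ℂ) + 1 + ((b : ℂ) + 1)) = ((a + b + 1 : ℕ) : ℂ) + 1 := by push_cast; ring
    rw [this, Complex.Gamma_nat_eq_factorial]
  rw [hga, hgb, hgab] at h2
  have hne : ((a + b + 1)! : ℂ) ≠ 0 := by exact_mod_cast Nat.cast_ne_zero.mpr (a+b+1).factorial_ne_zero
  have : ((∫ x in (0:ℝ)..1, x ^ a * (1 - x) ^ b : ℝ) : ℂ)
      = ((a ! * b ! : ℝ) / ((a + b + 1)! : ℝ) : ℝ) := by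
    push_cast
    field_simp at h2 ⊢
    linear_combination (-1 : ℂ) * h2
  exact_mod_cast this

/-- The Wallenius integral with constant propensities:
`∫₀¹ (1 − z^{1/(M−m)})^m dz = 1 / C(M, m)` for natural numbers `m < M`. -/
theorem wallenius_integral_constant_propensity (M m : ℕ) (h : m < M) :
    ∫ z in (0 : ℝ)..1, (1 - z ^ ((1 : ℝ) / ((M - m : ℕ) : ℝ))) ^ m
      = 1 / (M.choose m : ℝ) := by
  set n := M - m with hn
  have hn0 : 0 < n := Nat.sub_pos_of_lt h
  have hnR : (0:ℝ) < n := by exact_mod_cast hn0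
  set c : ℝ := 1 / (n : ℝ) with hc
  have hc0 : 0 ≤ c := by positivity
  -- continuity of g
  have hgcont : Continuous fun z : ℝ => (1 - z ^ c) ^ m :=
    ((continuous_const.sub (Real.continuous_rpow_const hc0)).pow m)
  -- substitution z = t ^ n
  have hsub := intervalIntegral.integral_comp_smul_deriv (a := (0:ℝ)) (b := 1)
    (f := fun t => t ^ n) (f' := fun t => n * t ^ (n - 1))
    (g := fun z => (1 - z ^ c) ^ m)
    (fun t _ => hasDerivAt_pow n t) (by fun_prop) hgcont
  simp only [Function.comp] at hsub
  rw [zero_pow hn0.ne', one_pow] at hsub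
  rw [← hsub]
  have hcongr : ∫ t in (0:ℝ)..1, (↑n * t ^ (n - 1)) • (1 - (t ^ n) ^ c) ^ m
      = ∫ t in (0:ℝ)..1, (n : ℝ) * (t ^ (n-1) * (1 - t) ^ m) := by
    refine intervalIntegral.integral_congr fun t ht => ?_
    rw [Set.uIcc_of_le (by norm_num)] at ht
    have ht0 : 0 ≤ t := ht.1
    have : ((t : ℝ) ^ n) ^ c = t := by
      rw [← Real.rpow_natCast t n, ← Real.rpow_mul ht0]
      rw [hc, mul_one_div, div_self hnR.ne', Real.rpow_one]
    rw [this, smul_eq_mul]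
    ring
  rw [hcongr, intervalIntegral.integral_const_mul, beta_nat_integral (n-1) m]
  have hM : n - 1 + m + 1 = M := by omega
  have hfac : (n : ℝ) * (n-1)! = (n ! : ℝ) := by
    exact_mod_cast congrArg (Nat.cast : ℕ → ℝ) (Nat.mul_factorial_pred hn0.ne')
  have hchoose : (M.choose m : ℝ) * m ! * n ! = M ! := by
    exact_mod_cast congrArg (Nat.cast : ℕ → ℝ)
      (Nat.choose_mul_factorial_mul_factorial h.le)
  rw [hM]
  have hch0 : (M.choose m : ℝ) ≠ 0 := by
    exact_mod_cast Nat.cast_ne_zero.mpr (Nat.choose_pos h.le).ne'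
  have hMfac : (M ! : ℝ) ≠ 0 := by exact_mod_cast M.factorial_ne_zero
  field_simp
  linear_combination hchoose + (M.choose m : ℝ) * (m ! : ℝ) * hfac
end

section
/- Let ι be a finite type, Ξ : ι → ℕ, M = ∑_{e} Ξ(e), and A : ι → ℕ with m = ∑_e A(e) and m < M. Let the propensity be constant: Ω(e) = c for all e, with c > 0 a real number, and set S_Ω = ∑_e Ω(e)·(Ξ(e) − A(e)) = c·(M − m). Then the Wallenius non-central hypergeometric probability equals the hypergeometric probability: (∏_e C(Ξ(e), A(e))) · ∫₀¹ ∏_e (1 − z^{Ω(e)/S_Ω})^{A(e)} dz = (∏_e C(Ξ(e), A(e))) / C(M, m). In other words, the generalised hypergeometric ensemble with constant propensity matrix coincides with the soft configuration model induced by the same graph. -/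
open Finset Nat

lemma aux_prod_fact (a b : ℕ) :
    (∏ j ∈ Finset.range (b + 1), (a + 1 + j)) * a ! = (a + b + 1)! := by
  induction b with
  | zero => simp [Nat.factorial_succ]
  | succ n ih =>
      rw [Finset.prod_range_succ, mul_right_comm, ih]
      have h2 : a + (n+1) + 1 = (a + n + 1) + 1 := by ring
      rw [h2, Nat.factorial_succ (a + n + 1)]
      ring

lemma beta_nat (a b : ℕ) :
    ∫ x in (0:ℝ)..1, x ^ a * (1 - x) ^ b = ((a ! : ℝ) * b !) / (a + b + 1)! := by
  have hu : 0 < Complex.re ((a : ℂ) + 1) := by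
    simp only [Complex.add_re, Complex.natCast_re, Complex.one_re]
    positivity
  have h := Complex.betaIntegral_eval_nat_add_one_right hu b
  rw [Complex.betaIntegral] at h
  simp only [add_sub_cancel_right] at h
  have hint : ∀ x : ℝ, (x : ℂ) ^ (a : ℂ) * (1 - (x : ℂ)) ^ (b : ℂ)
      = ((x ^ a * (1 - x) ^ b : ℝ) : ℂ) := by
    intro x
    rw [Complex.cpow_natCast, Complex.cpow_natCast]
    push_cast
    ring
  simp only [hint] at h
  rw [intervalIntegral.integral_ofReal] at h
  have hprod : ∏ j ∈ Finset.range (b + 1), ((a : ℂ) + 1 + (j : ℕ))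
      = ((∏ j ∈ Finset.range (b + 1), (a + 1 + j) : ℕ) : ℂ) := by
    push_cast
    ring_nf
  rw [hprod] at h
  have hI : (∫ x in (0:ℝ)..1, x ^ a * (1 - x) ^ b)
      = (b ! : ℝ) / ((∏ j ∈ Finset.range (b + 1), (a + 1 + j) : ℕ) : ℝ) := by
    apply Complex.ofReal_injective
    push_cast
    exact_mod_cast h
  rw [hI]
  have hP : (0:ℕ) < ∏ j ∈ Finset.range (b + 1), (a + 1 + j) :=
    Finset.prod_pos fun j _ => by omega
  have hPP : ((∏ j ∈ Finset.range (b + 1), (a + 1 + j) : ℕ) : ℝ) ≠ 0 := by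
    exact_mod_cast hP.ne'
  have hfac : ((a + b + 1)! : ℝ)
      = ((∏ j ∈ Finset.range (b + 1), (a + 1 + j) : ℕ) : ℝ) * (a ! : ℝ) := by
    rw [← aux_prod_fact a b]; push_cast; ring
  rw [hfac]
  rw [div_eq_div_iff hPP (by positivity)]
  ring

/-- The generalised hypergeometric ensemble with constant propensity matrix coincides
with the soft configuration model: if `Ω e = c > 0` for all `e` and
`S = ∑ e, Ω e * (Ξ e − A e)` (which equals `c * (M − m)`), then the Wallenius
non-central hypergeometric probability
`(∏ e, C(Ξ e, A e)) * ∫₀¹ ∏ e, (1 − z^{Ω e / S})^{A e} dz` equals the hypergeometric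
probability `(∏ e, C(Ξ e, A e)) / C(M, m)`. -/
theorem ghypeg_constant_propensity_eq_softConfigurationModel
    (ι : Type*) [Fintype ι] (Ξ A : ι → ℕ) (M m : ℕ)
    (hM : M = ∑ e, Ξ e) (hm : m = ∑ e, A e) (hmM : m < M)
    (c : ℝ) (hc : 0 < c) (Ω : ι → ℝ) (hΩ : ∀ e, Ω e = c)
    (S : ℝ) (hS : S = ∑ e, Ω e * ((Ξ e : ℝ) - (A e : ℝ))) :
    (∏ e, ((Ξ e).choose (A e) : ℝ)) *
        ∫ z in (0 : ℝ)..1, ∏ e, (1 - z ^ (Ω e / S)) ^ (A e)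
      = (∏ e, ((Ξ e).choose (A e) : ℝ)) / (M.choose m : ℝ) := by
  set k : ℕ := M - m with hkdef
  have hk : 0 < k := Nat.sub_pos_of_lt hmM
  have hkR : (k : ℝ) = (M : ℝ) - (m : ℝ) := by
    rw [hkdef]; push_cast [Nat.cast_sub hmM.le]; ring
  have hSval : S = c * (k : ℝ) := by
    rw [hS]
    simp only [hΩ]
    rw [← Finset.mul_sum]
    congr 1
    rw [Finset.sum_sub_distrib, hkR, hM, hm]
    push_cast
    ring
  have hkne : (k : ℝ) ≠ 0 := by exact_mod_cast hk.ne'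
  have hexp : ∀ e, Ω e / S = 1 / (k : ℝ) := by
    intro e
    rw [hΩ e, hSval, ← div_div, div_self hc.ne']
  have hint : ∀ z : ℝ, ∏ e, (1 - z ^ (Ω e / S)) ^ (A e)
      = (1 - z ^ ((1:ℝ) / (k:ℝ))) ^ m := by
    intro z
    simp only [hexp]
    rw [Finset.prod_pow_eq_pow_sum, ← hm]
  suffices hMAIN : (∫ z in (0:ℝ)..1, (1 - z ^ ((1:ℝ)/(k:ℝ))) ^ m) = (M.choose m : ℝ)⁻¹ by
    simp only [hint]
    rw [hMAIN, div_eq_mul_inv]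
  -- change of variables z = t^k
  have hg : ContinuousOn (fun z : ℝ => (1 - z ^ ((1:ℝ)/(k:ℝ))) ^ m) (Set.Icc 0 1) := by
    apply ContinuousOn.pow
    apply continuousOn_const.sub
    exact ContinuousOn.rpow_const continuousOn_id fun x _ => Or.inr (by positivity)
  have hsub := intervalIntegral.integral_comp_smul_deriv'' (a := (0:ℝ)) (b := 1)
      (f := fun t => t ^ k) (f' := fun t => (k:ℝ) * t ^ (k-1))
      (g := fun z => (1 - z ^ ((1:ℝ)/(k:ℝ))) ^ m)
      ((continuous_pow k).continuousOn)
      (fun x _ => (hasDerivAt_pow k x).hasDerivWithinAt)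
      (by fun_prop)
      (by
        apply hg.mono
        rintro _ ⟨t, ht, rfl⟩
        rw [Set.uIcc_of_le (zero_le_one' ℝ)] at ht
        exact ⟨pow_nonneg ht.1 k, pow_le_one₀ ht.1 ht.2⟩)
  have heq : Set.EqOn
      (fun t : ℝ => ((k:ℝ) * t ^ (k-1)) •
        ((fun z => (1 - z ^ ((1:ℝ)/(k:ℝ))) ^ m) ∘ (fun t => t ^ k)) t)
      (fun t : ℝ => (k:ℝ) * (t ^ (k-1) * (1 - t) ^ m)) (Set.uIcc 0 1) := by
    intro t ht
    rw [Set.uIcc_of_le (zero_le_one' ℝ)] at ht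
    simp only [Function.comp_apply, smul_eq_mul]
    rw [← Real.rpow_natCast t k, ← Real.rpow_mul ht.1,
      mul_one_div, div_self hkne, Real.rpow_one]
    ring
  rw [intervalIntegral.integral_congr heq] at hsub
  simp only [one_pow, zero_pow hk.ne'] at hsub
  rw [← hsub, intervalIntegral.integral_const_mul, beta_nat]
  have hkm : (k - 1) + m + 1 = M := by omega
  rw [hkm]
  have hch : (M.choose m : ℝ) * ((m ! : ℝ) * (k ! : ℝ)) = (M ! : ℝ) := by
    rw [hkdef]
    exact_mod_cast congrArg (Nat.cast : ℕ → ℝ)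
      (by rw [← mul_assoc]; exact Nat.choose_mul_factorial_mul_factorial hmM.le)
  have hkfac : (k : ℝ) * ((k-1)! : ℝ) = (k ! : ℝ) := by
    exact_mod_cast congrArg (Nat.cast : ℕ → ℝ) (Nat.mul_factorial_pred hk.ne')
  have hchne : (M.choose m : ℝ) ≠ 0 := by
    exact_mod_cast (Nat.choose_pos hmM.le).ne'
  have hstep : (k:ℝ) * (((k-1)! : ℝ) * (m ! : ℝ) / (M ! : ℝ))
      = ((m ! : ℝ) * (k ! : ℝ)) / (M ! : ℝ) := by
    rw [← hkfac]; ring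
  have hMfne : (M ! : ℝ) ≠ 0 := by positivity
  rw [hstep, inv_eq_one_div, div_eq_div_iff hMfne hchne, one_mul, ← hch]
  ring
end
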